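/- arXiv:2510.13097 — 6 statements merged into one kernel-verified Lean document; each statement's English description precedes it below -/
import Mathlib

section
/- Let Ω ⊆ ℝ be an interval, v : Ω → ℝ continuous, λ ∈ ℝ, δ > 0, m ∈ ℕ*, and let E = {y ∈ Ω : |v(y) − λ| < δ^m} and 𝓔 = {y ∈ Ω : dist(y, E) < δ}. Then there exists a function χ : Ω → [−1, 1] such that: (i) |χ(y)| ≤ 1 for all y, and χ is Lipschitz with Lipschitz constant at most 1/δ; (ii) χ(y)·(v(y) − λ) ≥ 0 for all y ∈ Ω; (iii) for every y ∈ Ω \ 𝓔, χ(y) = sign(v(y) − λ). (One such choice is χ(y) = φ(sign(v(y) − λ)·dist(y, E)/δ), where φ is the unique odd function on ℝ with φ(t) = min{t, 1} for t ≥ 0.) -/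
/-!
Let `Z` be the zero set of `v - λ` in `Ω` and `g = min 1 (dist(·, Z) / δ)` (with `g = 1` when
`Z = ∅`). The cutoff is `χ = sign (v - λ) · g`. Across a sign change of `v - λ` the intermediate
value theorem provides a zero `z` between the two points, and `g` vanishes at `z`, so `χ` keeps
the Lipschitz constant `1/δ` of `g`. Since `Z ⊆ E`, `g = 1` at distance `≥ δ` from `E`.
-/

open Set Metric

namespace Real

lemma abs_sign_le_one (r : ℝ) : |sign r| ≤ 1 := by
  rcases sign_apply_eq r with h | h | h <;> simp [h]

lemma sign_eq_sign_of_mul_pos {a b : ℝ} (h : 0 < a * b) : sign a = sign b := by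
  rcases pos_and_pos_or_neg_and_neg_of_mul_pos h with ⟨ha, hb⟩ | ⟨ha, hb⟩
  · rw [sign_of_pos ha, sign_of_pos hb]
  · rw [sign_of_neg ha, sign_of_neg hb]

end Real

section ClippedInfDist

variable {α : Type*} [PseudoMetricSpace α]

open scoped Classical in
/-- Taken to be `1` for empty `S`, where `infDist` has the junk value `0`. -/
noncomputable def clippedInfDist (S : Set α) (δ : ℝ) (y : α) : ℝ :=
  if S.Nonempty then min 1 (infDist y S / δ) else 1

lemma clippedInfDist_nonneg (S : Set α) {δ : ℝ} (hδ : 0 ≤ δ) (y : α) :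
    0 ≤ clippedInfDist S δ y := by
  unfold clippedInfDist
  split_ifs
  · exact le_min zero_le_one (div_nonneg infDist_nonneg hδ)
  · exact zero_le_one

lemma clippedInfDist_le_one (S : Set α) (δ : ℝ) (y : α) : clippedInfDist S δ y ≤ 1 := by
  unfold clippedInfDist
  split_ifs
  exacts [min_le_left _ _, le_rfl]

lemma clippedInfDist_of_mem {S : Set α} (δ : ℝ) {y : α} (hy : y ∈ S) :
    clippedInfDist S δ y = 0 := by
  rw [clippedInfDist, if_pos ⟨y, hy⟩, infDist_zero_of_mem hy, zero_div, min_eq_right zero_le_one]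

lemma clippedInfDist_eq_one {S : Set α} {δ : ℝ} (hδ : 0 < δ) {y : α}
    (hy : ∀ z ∈ S, δ ≤ dist y z) : clippedInfDist S δ y = 1 := by
  unfold clippedInfDist
  split_ifs with hS
  · exact min_eq_left ((one_le_div hδ).2 ((le_infDist hS).2 hy))
  · rfl

lemma lipschitzWith_clippedInfDist (S : Set α) {δ : ℝ} (hδ : 0 < δ) :
    LipschitzWith (Real.toNNReal (1 / δ)) (clippedInfDist S δ) := by
  by_cases hS : S.Nonempty
  · refine LipschitzWith.of_dist_le_mul fun x y => ?_
    simp only [clippedInfDist, if_pos hS, Real.dist_eq]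
    rw [Real.coe_toNNReal _ (by positivity)]
    calc |min 1 (infDist x S / δ) - min 1 (infDist y S / δ)|
        ≤ |infDist x S / δ - infDist y S / δ| := by
          simpa using abs_min_sub_min_le_max 1 (infDist x S / δ) 1 (infDist y S / δ)
      _ = |infDist x S - infDist y S| / δ := by rw [← sub_div, abs_div, abs_of_pos hδ]
      _ ≤ dist x y / δ := by
          gcongr
          simpa [Real.dist_eq] using (lipschitz_infDist_pt S).dist_le_mul x y
      _ = 1 / δ * dist x y := by ring
  · have hconst : clippedInfDist S δ = fun _ => 1 := funext fun _ => if_neg hS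
    rw [hconst]
    exact (LipschitzWith.const 1).weaken zero_le

end ClippedInfDist

lemma Metric.le_dist_of_ofReal_le_infEDist {α : Type*} [PseudoMetricSpace α] {x y : α}
    {s : Set α} {r : ℝ} (h : ENNReal.ofReal r ≤ infEDist x s) (hy : y ∈ s) : r ≤ dist x y := by
  have := le_infEDist.1 h y hy
  rwa [edist_dist, ENNReal.ofReal_le_ofReal_iff dist_nonneg] at this

section SignCutoff

variable {Ω : Set ℝ} {u g : ℝ → ℝ} {K : NNReal}

lemma abs_add_abs_le_of_mul_nonpos (hΩ : Ω.OrdConnected) (hu : ContinuousOn u Ω)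
    (hg : LipschitzOnWith K g Ω) (hgu : ∀ z ∈ Ω, u z = 0 → g z = 0)
    {a b : ℝ} (ha : a ∈ Ω) (hb : b ∈ Ω) (hab : u a * u b ≤ 0) :
    |g a| + |g b| ≤ K * dist a b := by
  have hsub := hΩ.uIcc_subset ha hb
  have hzero : (0 : ℝ) ∈ uIcc (u a) (u b) := by
    rcases mul_nonpos_iff.1 hab with ⟨h₁, h₂⟩ | ⟨h₁, h₂⟩
    exacts [mem_uIcc.2 (Or.inr ⟨h₂, h₁⟩), mem_uIcc.2 (Or.inl ⟨h₁, h₂⟩)]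
  obtain ⟨z, hz, huz⟩ := intermediate_value_uIcc (hu.mono hsub) hzero
  have hgz := hgu z (hsub hz) huz
  have hza := hg.dist_le_mul a ha z (hsub hz)
  have hzb := hg.dist_le_mul z (hsub hz) b hb
  rw [hgz, Real.dist_eq, sub_zero] at hza
  rw [hgz, Real.dist_eq, zero_sub, abs_neg] at hzb
  have hsplit : dist a z + dist z b = dist a b :=
    dist_add_dist_of_mem_segment (by rwa [segment_eq_uIcc])
  rw [← hsplit, mul_add]
  linarith

lemma LipschitzOnWith.sign_mul (hΩ : Ω.OrdConnected) (hu : ContinuousOn u Ω)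
    (hg : LipschitzOnWith K g Ω) (hgu : ∀ z ∈ Ω, u z = 0 → g z = 0) :
    LipschitzOnWith K (fun y => Real.sign (u y) * g y) Ω := by
  refine LipschitzOnWith.of_dist_le_mul fun a ha b hb => ?_
  rw [Real.dist_eq]
  rcases le_or_gt (u a * u b) 0 with hab | hab
  · calc |Real.sign (u a) * g a - Real.sign (u b) * g b|
        ≤ |Real.sign (u a)| * |g a| + |Real.sign (u b)| * |g b| := by
          rw [← abs_mul, ← abs_mul]; exact abs_sub _ _
      _ ≤ |g a| + |g b| := by
          gcongr <;> exact mul_le_of_le_one_left (abs_nonneg _) (Real.abs_sign_le_one _)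
      _ ≤ K * dist a b := abs_add_abs_le_of_mul_nonpos hΩ hu hg hgu ha hb hab
  · calc |Real.sign (u a) * g a - Real.sign (u b) * g b|
        = |Real.sign (u a)| * |g a - g b| := by
          rw [Real.sign_eq_sign_of_mul_pos hab, ← mul_sub, abs_mul]
      _ ≤ |g a - g b| := mul_le_of_le_one_left (abs_nonneg _) (Real.abs_sign_le_one _)
      _ ≤ K * dist a b := by rw [← Real.dist_eq]; exact hg.dist_le_mul a ha b hb

end SignCutoff

theorem cutoff_function_exists_general
    (Ω : Set ℝ) (hΩ : Ω.OrdConnected)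
    (v : ℝ → ℝ) (hv : ContinuousOn v Ω)
    (lam δ : ℝ) (hδ : 0 < δ) (m : ℕ) :
    ∃ χ : ℝ → ℝ,
      -- (i) bounded by 1 and Lipschitz with constant at most `1/δ`
      (∀ y ∈ Ω, |χ y| ≤ 1) ∧
      LipschitzOnWith (Real.toNNReal (1 / δ)) χ Ω ∧
      -- (ii) `χ (v − λ) ≥ 0` on `Ω`
      (∀ y ∈ Ω, 0 ≤ χ y * (v y - lam)) ∧
      -- (iii) `χ = sign (v − λ)` outside the thickened neighborhood `𝓔`
      (∀ y ∈ Ω \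
          {z ∈ Ω | EMetric.infEdist z {w ∈ Ω | |v w - lam| < δ ^ m} < ENNReal.ofReal δ},
        χ y = Real.sign (v y - lam)) := by
  set Z := {z ∈ Ω | v z - lam = 0}
  refine ⟨fun y => Real.sign (v y - lam) * clippedInfDist Z δ y,
    fun y _ => ?_, ?_, fun y _ => ?_, ?_⟩
  · rw [abs_mul, abs_of_nonneg (clippedInfDist_nonneg Z hδ.le y)]
    exact mul_le_one₀ (Real.abs_sign_le_one _) (clippedInfDist_nonneg Z hδ.le y)
      (clippedInfDist_le_one Z δ y)
  · exact ((lipschitzWith_clippedInfDist Z hδ).lipschitzOnWith).sign_mul hΩ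
      (hv.sub continuousOn_const) fun z hz hvz => clippedInfDist_of_mem δ ⟨hz, hvz⟩
  · rw [mul_right_comm]
    exact mul_nonneg (Real.sign_mul_nonneg _) (clippedInfDist_nonneg Z hδ.le y)
  · rintro y ⟨hyΩ, hyfar⟩
    have hfar : ENNReal.ofReal δ ≤ infEDist y {w ∈ Ω | |v w - lam| < δ ^ m} :=
      not_lt.1 fun h => hyfar ⟨hyΩ, h⟩
    have hZ : ∀ z ∈ Z, δ ≤ dist y z := fun z ⟨hz, hvz⟩ =>
      le_dist_of_ofReal_le_infEDist hfar ⟨hz, by rw [hvz, abs_zero]; positivity⟩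
    dsimp only
    rw [clippedInfDist_eq_one hδ hZ, mul_one]

/-- existence of the cutoff function `χ`.  For an interval `Ω`,
a continuous `v`, `λ ∈ ℝ`, `δ > 0` and `m ∈ ℕ*`, with
`E = {y ∈ Ω : |v(y) − λ| < δ^m}` and `𝓔 = {y ∈ Ω : dist(y, E) < δ}` (with
`dist(y, ∅) = ∞`), there is `χ : Ω → [−1,1]` which is `(1/δ)`-Lipschitz, satisfies
`χ·(v − λ) ≥ 0` on `Ω`, and equals `sign(v − λ)` on `Ω \ 𝓔`. -/
theorem cutoff_function_exists
    (Ω : Set ℝ) (hΩ : Ω.OrdConnected)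
    (v : ℝ → ℝ) (hv : ContinuousOn v Ω)
    (lam δ : ℝ) (hδ : 0 < δ) (m : ℕ) (hm : 1 ≤ m) :
    ∃ χ : ℝ → ℝ,
      -- (i) bounded by 1 and Lipschitz with constant at most `1/δ`
      (∀ y ∈ Ω, |χ y| ≤ 1) ∧
      LipschitzOnWith (Real.toNNReal (1 / δ)) χ Ω ∧
      -- (ii) `χ (v − λ) ≥ 0` on `Ω`
      (∀ y ∈ Ω, 0 ≤ χ y * (v y - lam)) ∧
      -- (iii) `χ = sign (v − λ)` outside the thickened neighborhood `𝓔`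
      (∀ y ∈ Ω \
          {z ∈ Ω | EMetric.infEdist z {w ∈ Ω | |v w - lam| < δ ^ m} < ENNReal.ofReal δ},
        χ y = Real.sign (v y - lam)) :=
  cutoff_function_exists_general Ω hΩ v hv lam δ hδ m
end

section
/- Let m ≥ 1 and L₁ < L₂ be real numbers, and let v : [L₁, L₂] → ℝ be a C^m function satisfying |v'(y)| + |v''(y)| + ⋯ + |v^{(m)}(y)| > 0 for all y ∈ [L₁, L₂]. Then v is piecewise strictly monotone: there exist N ∈ ℕ* and points L₁ = y₀ < y₁ < ⋯ < y_N = L₂ such that v is strictly monotone on each interval [y_{j−1}, y_j] for j = 1, …, N, and the direction of monotonicity (strictly increasing vs. strictly decreasing) alternates between consecutive intervals. -/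
/-!
If `g^{(k)}(y) ≠ 0` then `y` is an isolated zero of `g`: for `k = 0` by continuity, and in general
because two zeros of `g` arbitrarily close to `y` would give, by Rolle's theorem, zeros of `g'`
arbitrarily close to `y` and different from it. Since some `v^{(j)}`, `1 ≤ j ≤ m`, is nonzero at
every point, the zeros of `v'` are isolated, hence finitely many in the compact interval. Between
consecutive zeros `v'` has constant sign by Darboux's theorem, so `v` is strictly monotone there;
merging adjacent pieces with the same direction makes the directions alternate.
-/

open Set Filter Topology Finset

section Partition

variable {α β : Type*} [LinearOrder α] [Preorder β]

def StrictDirOn (up : Bool) (f : α → β) (s : Set α) : Prop :=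
  if up then StrictMonoOn f s else StrictAntiOn f s

theorem StrictDirOn.Icc_union {up : Bool} {f : α → β} {a b c : α} (hab : a ≤ b) (hbc : b ≤ c)
    (h₁ : StrictDirOn up f (Icc a b)) (h₂ : StrictDirOn up f (Icc b c)) :
    StrictDirOn up f (Icc a c) := by
  rw [← Icc_union_Icc_eq_Icc hab hbc]
  cases up
  · exact StrictAntiOn.union h₁ h₂ (isGreatest_Icc hab) (isLeast_Icc hbc)
  · exact StrictMonoOn.union h₁ h₂ (isGreatest_Icc hab) (isLeast_Icc hbc)

def HasAlternatingPartition (f : α → β) (a b : α) (up : Bool) : Prop :=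
  ∃ N, 0 < N ∧ ∃ ys : ℕ → α, ys 0 = a ∧ ys N = b ∧ (∀ j < N, ys j < ys (j + 1)) ∧
    ∀ j < N, StrictDirOn (if Even j then up else !up) f (Icc (ys j) (ys (j + 1)))

namespace HasAlternatingPartition

variable {f : α → β} {a b c : α} {up : Bool}

theorem single (hab : a < b) (h : StrictDirOn up f (Icc a b)) :
    HasAlternatingPartition f a b up := by
  refine ⟨1, one_pos, fun | 0 => a | _ => b, rfl, rfl, ?_, ?_⟩ <;>
    intro j hj <;> obtain rfl := Nat.lt_one_iff.1 hj
  exacts [hab, by simpa using h]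

theorem cons_same (hac : a < c) (h : StrictDirOn up f (Icc a c))
    (hp : HasAlternatingPartition f c b up) : HasAlternatingPartition f a b up := by
  obtain ⟨N, hN, ys, rfl, rfl, hinc, hdir⟩ := hp
  obtain ⟨N, rfl⟩ := Nat.exists_eq_succ_of_ne_zero hN.ne'
  refine ⟨N + 1, hN, fun | 0 => a | j + 1 => ys (j + 1), rfl, rfl, ?_, ?_⟩ <;> rintro (_ | j) hj
  · exact hac.trans (hinc 0 hN)
  · exact hinc (j + 1) hj
  · simpa using h.Icc_union hac.le (hinc 0 hN).le (by simpa using hdir 0 hN)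
  · exact hdir (j + 1) hj

theorem cons_flip (hac : a < c) (h : StrictDirOn (!up) f (Icc a c))
    (hp : HasAlternatingPartition f c b up) : HasAlternatingPartition f a b (!up) := by
  obtain ⟨N, hN, ys, rfl, rfl, hinc, hdir⟩ := hp
  refine ⟨N + 1, N.succ_pos, fun | 0 => a | j + 1 => ys j, rfl, rfl, ?_, ?_⟩ <;>
    rintro (_ | j) hj
  · exact hac
  · exact hinc j (Nat.succ_lt_succ_iff.1 hj)
  · simpa using h
  · by_cases hj' : Even j <;>
      simpa [hj', Nat.even_add_one] using hdir j (Nat.succ_lt_succ_iff.1 hj)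

end HasAlternatingPartition

theorem exists_hasAlternatingPartition {f : α → β} (Z : Finset α) {a b : α} (hab : a < b)
    (hdir : ∀ x y, a ≤ x → x < y → y ≤ b → (∀ z ∈ Z, z ∉ Ioo x y) →
      ∃ up, StrictDirOn up f (Icc x y)) :
    ∃ up, HasAlternatingPartition f a b up := by
  induction hn : #{z ∈ Z | z ∈ Ioo a b} using Nat.strong_induction_on generalizing a with
  | _ n ih =>
  by_cases hZ : ({z ∈ Z | z ∈ Ioo a b} : Finset α).Nonempty
  · set c := ({z ∈ Z | z ∈ Ioo a b} : Finset α).min' hZ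
    obtain ⟨-, hac, hcb⟩ := mem_filter.1 (min'_mem _ hZ)
    have hcard : #{z ∈ Z | z ∈ Ioo c b} < n := by
      refine hn ▸ card_lt_card (ssubset_of_subset_of_ne (fun z hz ↦ ?_) fun h ↦ ?_)
      · obtain ⟨hz, hcz, hzb⟩ := mem_filter.1 hz
        exact mem_filter.2 ⟨hz, hac.trans hcz, hzb⟩
      · exact (mem_filter.1 (h.symm.subset (min'_mem _ hZ))).2.1.false
    obtain ⟨up, hp⟩ := ih _ hcard hcb (fun x y hx ↦ hdir x y (hac.le.trans hx)) rfl
    obtain ⟨e, he⟩ := hdir a c le_rfl hac hcb.le fun z hz hzI ↦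
      hzI.2.not_ge (min'_le _ z (mem_filter.2 ⟨hz, hzI.1, hzI.2.trans hcb⟩))
    cases e.eq_or_eq_not up with
    | inl h => exact ⟨up, hp.cons_same hac (h ▸ he)⟩
    | inr h => exact ⟨!up, hp.cons_flip hac (h ▸ he)⟩
  · obtain ⟨up, h⟩ := hdir a b le_rfl hab le_rfl fun z hz hzI ↦ hZ ⟨z, mem_filter.2 ⟨hz, hzI⟩⟩
    exact ⟨up, .single hab h⟩

end Partition

theorem exists_derivWithin_eq_zero_of_uIcc_subset {S : Set ℝ} {g : ℝ → ℝ} {x y : ℝ}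
    (hxy : x ≠ y) (hS : uIcc x y ⊆ S) (hg : DifferentiableOn ℝ g S) (h : g x = g y) :
    ∃ c ∈ uIoo x y, derivWithin g S c = 0 := by
  wlog hlt : x < y generalizing x y
  · simpa only [uIoo_comm] using
      this hxy.symm (uIcc_comm x y ▸ hS) h.symm (hxy.lt_or_gt.resolve_left hlt)
  rw [uIcc_of_lt hlt] at hS
  obtain ⟨c, hc, hc0⟩ := exists_deriv_eq_zero hlt (hg.continuousOn.mono hS) h
  have hSc : S ∈ 𝓝 c := mem_of_superset (Ioo_mem_nhds hc.1 hc.2) (Ioo_subset_Icc_self.trans hS)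
  exact ⟨c, uIoo_of_lt hlt ▸ hc, by rwa [derivWithin_of_mem_nhds hSc]⟩

theorem eventually_ne_zero_of_iteratedDerivWithin_ne_zero {S : Set ℝ} (hS : S.OrdConnected)
    (hS' : UniqueDiffOn ℝ S) {k : ℕ} {g : ℝ → ℝ} (hg : ContDiffOn ℝ k g S) {y : ℝ} (hy : y ∈ S)
    (h : iteratedDerivWithin k g S y ≠ 0) : ∀ᶠ x in 𝓝[S \ {y}] y, g x ≠ 0 := by
  induction k generalizing g with
  | zero =>
    rw [iteratedDerivWithin_zero] at h
    exact nhdsWithin_mono _ sdiff_subset ((hg.continuousOn y hy).eventually_ne h)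
  | succ k ih =>
    by_cases hgy : g y ≠ 0
    · exact nhdsWithin_mono _ sdiff_subset ((hg.continuousOn y hy).eventually_ne hgy)
    rw [not_not] at hgy
    have hg' := ih (hg.derivWithin hS' (by norm_cast)) (by rwa [← iteratedDerivWithin_succ'])
    obtain ⟨ε, hε, hball⟩ := Metric.mem_nhdsWithin_iff.1 hg'
    refine Metric.mem_nhdsWithin_iff.2 ⟨ε, hε, fun x ⟨hxε, hxS, hxy⟩ hgx ↦ ?_⟩
    have hT : (Metric.ball y ε ∩ S).OrdConnected := by
      rw [Real.ball_eq_Ioo]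
      exact ordConnected_Ioo.inter hS
    obtain ⟨c, hc, hc0⟩ := exists_derivWithin_eq_zero_of_uIcc_subset hxy
      ((hT.uIcc_subset ⟨hxε, hxS⟩ ⟨Metric.mem_ball_self hε, hy⟩).trans inter_subset_right)
      (hg.differentiableOn (by simp)) (hgx.trans hgy.symm)
    obtain ⟨hcε, hcS⟩ := hT.uIcc_subset ⟨hxε, hxS⟩ ⟨Metric.mem_ball_self hε, hy⟩
      (uIoo_subset_uIcc_self hc)
    exact hball ⟨hcε, hcS, fun hcy ↦ right_notMem_uIoo (hcy ▸ hc)⟩ hc0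

theorem finite_zeros_of_iteratedDerivWithin_ne_zero {S : Set ℝ} (hSc : IsCompact S)
    (hS : S.OrdConnected) (hS' : UniqueDiffOn ℝ S) {n : ℕ} {g : ℝ → ℝ} (hg : ContDiffOn ℝ n g S)
    (h : ∀ y ∈ S, ∃ k ≤ n, iteratedDerivWithin k g S y ≠ 0) : {y ∈ S | g y = 0}.Finite := by
  have hclosed : IsClosed {y ∈ S | g y = 0} :=
    hg.continuousOn.preimage_isClosed_of_isClosed hSc.isClosed isClosed_singleton
  refine (hSc.of_isClosed_subset hclosed fun y hy ↦ hy.1).finite ?_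
  refine isDiscrete_iff_nhdsNE.2 fun y ⟨hy, _⟩ ↦ ?_
  obtain ⟨k, hk, hk0⟩ := h y hy
  have hne := eventually_ne_zero_of_iteratedDerivWithin_ne_zero hS hS'
    (hg.of_le (by exact_mod_cast hk)) hy hk0
  rw [← nhdsWithin_inter', ← eventually_false_iff_eq_bot]
  have hsub : {y}ᶜ ∩ {y ∈ S | g y = 0} ⊆ S \ {y} := fun x hx ↦ ⟨hx.2.1, hx.1⟩
  filter_upwards [nhdsWithin_mono _ hsub hne, self_mem_nhdsWithin] with x hx hx0
  exact hx hx0.2.2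

theorem exists_strictDirOn_Icc_of_deriv_ne_zero {f : ℝ → ℝ} {x y : ℝ}
    (hf : ContinuousOn f (Icc x y)) (hf' : ∀ c ∈ Ioo x y, deriv f c ≠ 0) :
    ∃ up, StrictDirOn up f (Icc x y) := by
  have hder : ∀ c ∈ Ioo x y, HasDerivWithinAt f (deriv f c) (Ioo x y) c := fun c hc ↦
    (differentiableAt_of_deriv_ne_zero (hf' c hc)).hasDerivAt.hasDerivWithinAt
  rcases hasDerivWithinAt_forall_lt_or_forall_gt_of_forall_ne (convex_Ioo x y) hder hf' with
    hneg | hpos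
  · exact ⟨false, strictAntiOn_of_deriv_neg (convex_Icc x y) hf (by simpa using hneg)⟩
  · exact ⟨true, strictMonoOn_of_deriv_pos (convex_Icc x y) hf (by simpa using hpos)⟩

/-- piecewise strict monotonicity.  If `v ∈ C^m([L₁,L₂])` satisfies the
`m`-th order non-degeneracy condition, then there is a partition
`L₁ = y₀ < y₁ < ⋯ < y_N = L₂` such that `v` is strictly monotone on each `[y_{j−1}, y_j]`,
with alternating direction of monotonicity on consecutive intervals. -/
theorem piecewise_strict_monotonicity
    (m : ℕ) (hm : 1 ≤ m) (L₁ L₂ : ℝ) (hL : L₁ < L₂)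
    (v : ℝ → ℝ) (hv : ContDiffOn ℝ m v (Set.Icc L₁ L₂))
    (hnd : ∀ y ∈ Set.Icc L₁ L₂,
      0 < ∑ j ∈ Finset.Icc 1 m, |iteratedDerivWithin j v (Set.Icc L₁ L₂) y|) :
    ∃ N : ℕ, 0 < N ∧ ∃ ys : ℕ → ℝ,
      ys 0 = L₁ ∧ ys N = L₂ ∧ (∀ j < N, ys j < ys (j + 1)) ∧
      ((∀ j < N,
          if Even j then StrictMonoOn v (Set.Icc (ys j) (ys (j + 1)))
          else StrictAntiOn v (Set.Icc (ys j) (ys (j + 1)))) ∨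
       (∀ j < N,
          if Even j then StrictAntiOn v (Set.Icc (ys j) (ys (j + 1)))
          else StrictMonoOn v (Set.Icc (ys j) (ys (j + 1))))) := by
  set S := Icc L₁ L₂
  have hS : UniqueDiffOn ℝ S := uniqueDiffOn_Icc hL
  have hZ : {y ∈ S | derivWithin v S y = 0}.Finite := by
    refine finite_zeros_of_iteratedDerivWithin_ne_zero isCompact_Icc ordConnected_Icc hS
      (n := m - 1) (hv.derivWithin hS (by norm_cast; omega)) fun y hy ↦ ?_
    obtain ⟨j, hj, hj0⟩ := Finset.exists_ne_zero_of_sum_ne_zero (hnd y hy).ne'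
    obtain ⟨hj1, hjm⟩ := Finset.mem_Icc.1 hj
    refine ⟨j - 1, by omega, ?_⟩
    rwa [← iteratedDerivWithin_succ', Nat.sub_add_cancel hj1, ← abs_ne_zero]
  have hpieces : ∀ x y, L₁ ≤ x → x < y → y ≤ L₂ → (∀ z ∈ hZ.toFinset, z ∉ Ioo x y) →
      ∃ up, StrictDirOn up v (Icc x y) := by
    intro x y hx _ hy hxy
    refine exists_strictDirOn_Icc_of_deriv_ne_zero (hv.continuousOn.mono (Icc_subset_Icc hx hy))
      fun c hc hc0 ↦ hxy c (hZ.mem_toFinset.2 ⟨⟨hx.trans hc.1.le, hc.2.le.trans hy⟩, ?_⟩) hc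
    rwa [derivWithin_of_mem_nhds (Icc_mem_nhds (hx.trans_lt hc.1) (hc.2.trans_le hy))]
  obtain ⟨up, N, hN, ys, h0, hN', hinc, hdir⟩ :=
    exists_hasAlternatingPartition hZ.toFinset hL hpieces
  refine ⟨N, hN, ys, h0, hN', hinc, ?_⟩
  cases up
  · exact .inr fun j hj ↦ by by_cases hj' : Even j <;> simpa [StrictDirOn, hj'] using hdir j hj
  · exact .inl fun j hj ↦ by by_cases hj' : Even j <;> simpa [StrictDirOn, hj'] using hdir j hj
end

section
/- Let m ≥ 1 and L₁ < L₂ be real numbers, and let v : [L₁, L₂] → ℝ be a C^m function satisfying |v'(y)| + |v''(y)| + ⋯ + |v^{(m)}(y)| > 0 for all y ∈ [L₁, L₂]. Then the cardinality of the level sets of v is uniformly bounded: there exists N₀ ∈ ℕ* such that for every λ ∈ ℝ, the set E_λ = {y ∈ [L₁, L₂] : v(y) = λ} is finite with card(E_λ) ≤ N₀. -/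
/-!
Near each point of `[L₁, L₂]` some derivative `v⁽ʲ⁾` with `1 ≤ j ≤ m` is nonzero, hence nonzero
on a whole relative neighbourhood. On that (convex) neighbourhood, `j` applications of Rolle's
theorem show that every level set of `v` has at most `j` points. Compactness of `[L₁, L₂]` leaves
finitely many such neighbourhoods, so the level sets are uniformly bounded by the sum of their `j`.
-/

open Set Filter Topology

theorem Set.encard_le_coe_of_forall_finset_card_le {α : Type*} {s : Set α} {n : ℕ}
    (h : ∀ t : Finset α, ↑t ⊆ s → t.card ≤ n) : s.encard ≤ n := by
  by_contra! hlt
  obtain ⟨t, hts, ht⟩ := exists_subset_encard_eq (Order.add_one_le_of_lt hlt)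
  have htfin : t.Finite := finite_of_encard_eq_coe (k := n + 1) (by exact_mod_cast ht)
  have := h htfin.toFinset (by simpa using hts)
  rw [← Nat.cast_le (α := ℕ∞), ← encard_coe_eq_coe_finsetCard, htfin.coe_toFinset, ht] at this
  norm_cast at this
  omega

theorem encard_level_set_le_encard_deriv_zeros_add_one {s : Set ℝ} (hs : s.OrdConnected)
    {f f' : ℝ → ℝ} (hf : ∀ x ∈ s, HasDerivWithinAt f (f' x) s x) (c : ℝ) :
    {x ∈ s | f x = c}.encard ≤ {x ∈ s | f' x = 0}.encard + 1 := by
  obtain hinf | hfin := {x ∈ s | f' x = 0}.finite_or_infinite.symm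
  · simp [hinf.encard_eq]
  rw [hfin.encard_eq_coe_toFinset_card, ← Nat.cast_add_one]
  refine encard_le_coe_of_forall_finset_card_le fun T hT ↦
    Finset.card_le_of_interleaved fun x hx y hy hxy _ ↦ ?_
  obtain ⟨hxs, hfx⟩ := hT hx
  obtain ⟨hys, hfy⟩ := hT hy
  have hIcc : Icc x y ⊆ s := hs.out hxs hys
  obtain ⟨z, hz, hf'z⟩ := exists_hasDerivAt_eq_zero hxy
    (fun t ht ↦ (hf t (hIcc ht)).continuousWithinAt.mono hIcc) (hfx.trans hfy.symm)
    fun t ht ↦ (hf t (hIcc (Ioo_subset_Icc_self ht))).hasDerivAt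
      (mem_of_superset (Ioo_mem_nhds ht.1 ht.2) (Ioo_subset_Icc_self.trans hIcc))
  exact ⟨z, by simpa using ⟨hIcc (Ioo_subset_Icc_self hz), hf'z⟩, hz⟩

theorem encard_level_set_le_of_hasDerivWithinAt_chain {s : Set ℝ} (hs : s.OrdConnected)
    {f : ℕ → ℝ → ℝ} {k : ℕ} (hf : ∀ i ≤ k, ∀ x ∈ s, HasDerivWithinAt (f i) (f (i + 1) x) s x)
    (c : ℝ) : {x ∈ s | f 0 x = c}.encard ≤ {x ∈ s | f (k + 1) x = 0}.encard + (k + 1 : ℕ) := by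
  induction k with
  | zero => simpa using encard_level_set_le_encard_deriv_zeros_add_one hs (hf 0 le_rfl) c
  | succ k ih =>
    calc {x ∈ s | f 0 x = c}.encard
        ≤ {x ∈ s | f (k + 1) x = 0}.encard + (k + 1 : ℕ) := ih fun i hi ↦ hf i (by omega)
      _ ≤ {x ∈ s | f (k + 2) x = 0}.encard + 1 + (k + 1 : ℕ) := by
        gcongr
        exact encard_level_set_le_encard_deriv_zeros_add_one hs (hf (k + 1) le_rfl) 0
      _ = _ := by push_cast; ring

theorem ContDiffOn.hasDerivWithinAt_iteratedDerivWithin {𝕜 F : Type*}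
    [NontriviallyNormedField 𝕜] [NormedAddCommGroup F] [NormedSpace 𝕜 F]
    {n : WithTop ℕ∞} {f : 𝕜 → F} {s : Set 𝕜} (hf : ContDiffOn 𝕜 n f s) (hs : UniqueDiffOn 𝕜 s)
    {i : ℕ} (hi : i < n) {x : 𝕜} (hx : x ∈ s) :
    HasDerivWithinAt (iteratedDerivWithin i f s) (iteratedDerivWithin (i + 1) f s x) s x := by
  rw [iteratedDerivWithin_succ]
  exact (hf.differentiableOn_iteratedDerivWithin hi hs x hx).hasDerivWithinAt

theorem encard_level_set_le_of_iteratedDerivWithin_ne_zero {n : WithTop ℕ∞} {f : ℝ → ℝ}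
    {s t : Set ℝ} (hf : ContDiffOn ℝ n f s) (hs : UniqueDiffOn ℝ s) (ht : t.OrdConnected)
    (hts : t ⊆ s) {j : ℕ} (hj₀ : j ≠ 0) (hjn : j ≤ n)
    (hne : ∀ x ∈ t, iteratedDerivWithin j f s x ≠ 0) (c : ℝ) :
    {x ∈ t | f x = c}.encard ≤ j := by
  obtain ⟨k, rfl⟩ := Nat.exists_eq_succ_of_ne_zero hj₀
  have hchain : ∀ i ≤ k, ∀ x ∈ t, HasDerivWithinAt (iteratedDerivWithin i f s)
      (iteratedDerivWithin (i + 1) f s x) t x := fun i hi x hx ↦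
    (hf.hasDerivWithinAt_iteratedDerivWithin hs
      (lt_of_lt_of_le (by exact_mod_cast Nat.lt_succ_of_le hi) hjn) (hts hx)).mono hts
  have hempty : {x ∈ t | iteratedDerivWithin (k + 1) f s x = 0} = ∅ :=
    eq_empty_of_forall_notMem fun x hx ↦ hne x hx.1 hx.2
  simpa [hempty] using encard_level_set_le_of_hasDerivWithinAt_chain ht hchain c

theorem IsCompact.exists_encard_inter_le {X ι : Type*} [TopologicalSpace X] {K : Set X}
    (hK : IsCompact K) (E : ι → Set X)
    (h : ∀ x ∈ K, ∃ U ∈ 𝓝[K] x, ∃ N : ℕ, ∀ i, (U ∩ E i).encard ≤ N) :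
    ∃ M : ℕ, ∀ i, (K ∩ E i).encard ≤ M := by
  choose! U hU N hN using h
  obtain ⟨t, htK, hcover⟩ := hK.elim_nhdsWithin_subcover U hU
  refine ⟨∑ x ∈ t, N x, fun i ↦ ?_⟩
  calc (K ∩ E i).encard ≤ (⋃ x ∈ t, U x ∩ E i).encard := by
        rw [← iUnion₂_inter]
        exact encard_le_encard (inter_subset_inter_left _ hcover)
    _ ≤ ∑ x ∈ t, (U x ∩ E i).encard := t.set_encard_biUnion_le _
    _ ≤ ∑ x ∈ t, (N x : ℕ∞) := Finset.sum_le_sum fun x hx ↦ hN x (htK x hx) i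
    _ = _ := (Nat.cast_sum t N).symm

theorem level_sets_uniformly_finite_general
    (m : ℕ) (L₁ L₂ : ℝ) (hL : L₁ < L₂)
    (v : ℝ → ℝ) (hv : ContDiffOn ℝ m v (Set.Icc L₁ L₂))
    (hnd : ∀ y ∈ Set.Icc L₁ L₂,
      0 < ∑ j ∈ Finset.Icc 1 m, |iteratedDerivWithin j v (Set.Icc L₁ L₂) y|) :
    ∃ N₀ : ℕ, 0 < N₀ ∧ ∀ lam : ℝ,
      {y ∈ Set.Icc L₁ L₂ | v y = lam}.Finite ∧
      {y ∈ Set.Icc L₁ L₂ | v y = lam}.ncard ≤ N₀ := by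
  have hlocal : ∀ y ∈ Icc L₁ L₂, ∃ U ∈ 𝓝[Icc L₁ L₂] y, ∃ N : ℕ,
      ∀ lam, {x ∈ U | v x = lam}.encard ≤ N := by
    intro y hy
    obtain ⟨j, hj, hjy⟩ := Finset.exists_ne_zero_of_sum_ne_zero (hnd y hy).ne'
    rw [Finset.mem_Icc] at hj
    have hjm : (j : WithTop ℕ∞) ≤ m := by exact_mod_cast hj.2
    obtain ⟨ε, hε, hball⟩ := Metric.mem_nhdsWithin_iff.mp <|
      ((hv.continuousOn_iteratedDerivWithin hjm (uniqueDiffOn_Icc hL)) y hy).eventually_ne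
        (abs_ne_zero.mp hjy)
    exact ⟨_, inter_mem_nhdsWithin _ (Metric.ball_mem_nhds y hε), j, fun lam ↦
      encard_level_set_le_of_iteratedDerivWithin_ne_zero hv (uniqueDiffOn_Icc hL)
        ((convex_Icc L₁ L₂).inter (convex_ball y ε)).ordConnected inter_subset_left
        (by omega) hjm (fun x hx ↦ hball ⟨hx.2, hx.1⟩) lam⟩
  obtain ⟨M, hM⟩ := isCompact_Icc.exists_encard_inter_le (fun lam ↦ {x | v x = lam}) hlocal
  exact ⟨M + 1, M.succ_pos, fun lam ↦
    encard_le_coe_iff_finite_ncard_le.mp ((hM lam).trans (by norm_cast; omega))⟩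

/-- uniformly finite level sets.  If `v ∈ C^m([L₁,L₂])` satisfies the
`m`-th order non-degeneracy condition, then there is `N₀ ∈ ℕ*` such that for every
`λ ∈ ℝ` the level set `E_λ = {y ∈ [L₁,L₂] : v(y) = λ}` is finite with at most `N₀`
elements. -/
theorem level_sets_uniformly_finite
    (m : ℕ) (hm : 1 ≤ m) (L₁ L₂ : ℝ) (hL : L₁ < L₂)
    (v : ℝ → ℝ) (hv : ContDiffOn ℝ m v (Set.Icc L₁ L₂))
    (hnd : ∀ y ∈ Set.Icc L₁ L₂,
      0 < ∑ j ∈ Finset.Icc 1 m, |iteratedDerivWithin j v (Set.Icc L₁ L₂) y|) :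
    ∃ N₀ : ℕ, 0 < N₀ ∧ ∀ lam : ℝ,
      {y ∈ Set.Icc L₁ L₂ | v y = lam}.Finite ∧
      {y ∈ Set.Icc L₁ L₂ | v y = lam}.ncard ≤ N₀ :=
  level_sets_uniformly_finite_general m L₁ L₂ hL v hv hnd
end

section
/- Let m ≥ 1 and L₁ < L₂ be real numbers, and let v : [L₁, L₂] → ℝ be a C^m function satisfying |v'(y)| + ⋯ + |v^{(m)}(y)| > 0 for all y ∈ [L₁, L₂]. Let v₁ = min_{[L₁,L₂]} v and v₂ = max_{[L₁,L₂]} v; then v₁ < v₂, and for every λ ∈ [v₁, v₂] there exist δ₀(λ) > 0 and C(λ) > 0 such that for every λ' ∈ (λ − δ₀(λ)^m, λ + δ₀(λ)^m) and every δ ∈ (0, δ₀(λ)], the Lebesgue measure of the set E^m_{λ',δ} = {y ∈ [L₁, L₂] : |v(y) − λ'| < δ^m} satisfies m(E^m_{λ',δ}) ≤ C(λ) δ. -/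
/-!
Near each point of `[L₁, L₂]` some derivative `v⁽ʲ⁾` with `1 ≤ j ≤ m` stays away from zero, say
`|v⁽ʲ⁾| ≥ c` on an interval. There van der Corput's argument bounds `{|v - λ'| < ε}` by induction
on `j`: with `F = v⁽ʲ⁻¹⁾`, the part where `|F| < c r` has length at most `2 r` because `F` moves at
speed at least `c`, and the parts where `F ≥ c r` and `F ≤ -c r` are intervals (`F` is monotone)
on which the induction hypothesis applies with `c r` in place of `c`. For `ε = δ ^ m` and
`r ≍ δ` this gives `O(δ)`, and compactness patches finitely many such bounds together. A
derivative that does not vanish also shows that `v` is not constant.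
-/

open Set MeasureTheory
open scoped NNReal ENNReal Topology

theorem iteratedDerivWithin_sub_const {𝕜 F : Type*} [NontriviallyNormedField 𝕜]
    [NormedAddCommGroup F] [NormedSpace 𝕜 F] {n : ℕ} (hn : n ≠ 0) (f : 𝕜 → F) (c : F)
    (s : Set 𝕜) : iteratedDerivWithin n (fun z ↦ f z - c) s = iteratedDerivWithin n f s := by
  obtain ⟨n, rfl⟩ := Nat.exists_eq_succ_of_ne_zero hn
  rw [iteratedDerivWithin_succ', iteratedDerivWithin_succ', derivWithin_sub_const_fun]

def IsDerivChainOn (F : ℕ → ℝ → ℝ) (k : ℕ) (s : Set ℝ) : Prop :=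
  ∀ i < k, ∀ x ∈ s, HasDerivWithinAt (F i) (F (i + 1) x) s x

namespace IsDerivChainOn

variable {F : ℕ → ℝ → ℝ} {k : ℕ} {s t : Set ℝ}

theorem mono (hF : IsDerivChainOn F k s) (hts : t ⊆ s) : IsDerivChainOn F k t :=
  fun i hi x hx ↦ (hF i hi x (hts hx)).mono hts

theorem of_le {n : ℕ} (hF : IsDerivChainOn F n s) (hkn : k ≤ n) : IsDerivChainOn F k s :=
  fun i hi ↦ hF i (hi.trans_le hkn)

end IsDerivChainOn

theorem ContDiffOn.isDerivChainOn_iteratedDerivWithin {f : ℝ → ℝ} {s : Set ℝ} {n : ℕ}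
    (hf : ContDiffOn ℝ n f s) (hs : UniqueDiffOn ℝ s) :
    IsDerivChainOn (fun i ↦ iteratedDerivWithin i f s) n s := fun i hi x hx ↦ by
  show HasDerivWithinAt (iteratedDerivWithin i f s) (iteratedDerivWithin (i + 1) f s x) s x
  rw [iteratedDerivWithin_succ]
  exact (hf.differentiableOn_iteratedDerivWithin (by exact_mod_cast hi) hs x hx).hasDerivWithinAt

section DerivBoundedBelow

variable {s : Set ℝ} {f f' : ℝ → ℝ} {c : ℝ}

theorem Convex.mul_sub_le_sub_of_le_hasDerivWithinAt (hs : Convex ℝ s)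
    (hf : ∀ x ∈ s, HasDerivWithinAt f (f' x) s x) (hf' : ∀ x ∈ s, c ≤ f' x)
    {x y : ℝ} (hx : x ∈ s) (hy : y ∈ s) (hxy : x ≤ y) : c * (y - x) ≤ f y - f x := by
  have hg : ∀ z ∈ s, HasDerivWithinAt (fun z ↦ f z - c * z) (f' z - c) s z := fun z hz ↦ by
    simpa using (hf z hz).fun_sub ((hasDerivWithinAt_id z s).const_mul c)
  have hmono : MonotoneOn (fun z ↦ f z - c * z) s :=
    monotoneOn_of_hasDerivWithinAt_nonneg hs (fun z hz ↦ (hg z hz).continuousWithinAt)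
      (fun z hz ↦ (hg z (interior_subset hz)).mono interior_subset)
      (fun z hz ↦ sub_nonneg.2 (hf' z (interior_subset hz)))
  linarith [hmono hx hy hxy]

theorem Convex.mul_sub_le_abs_sub_of_le_abs_hasDerivWithinAt (hs : Convex ℝ s) (hc : 0 < c)
    (hf : ∀ x ∈ s, HasDerivWithinAt f (f' x) s x) (hf' : ∀ x ∈ s, c ≤ |f' x|)
    {x y : ℝ} (hx : x ∈ s) (hy : y ∈ s) (hxy : x ≤ y) : c * (y - x) ≤ |f y - f x| := by
  -- Darboux: a derivative bounded away from zero has constant sign.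
  rcases hasDerivWithinAt_forall_lt_or_forall_gt_of_forall_ne hs hf (m := 0)
    (fun z hz h ↦ by linarith [h ▸ hf' z hz, abs_zero (α := ℝ)]) with hneg | hpos
  · have := hs.mul_sub_le_sub_of_le_hasDerivWithinAt (fun z hz ↦ (hf z hz).neg)
      (fun z hz ↦ (abs_of_neg (hneg z hz)).symm ▸ hf' z hz) hx hy hxy
    rw [abs_sub_comm]
    simp only [Pi.neg_apply] at this
    linarith [le_abs_self (f x - f y)]
  · exact (hs.mul_sub_le_sub_of_le_hasDerivWithinAt hf
      (fun z hz ↦ (abs_of_pos (hpos z hz)).symm ▸ hf' z hz) hx hy hxy).trans (le_abs_self _)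

theorem Convex.monotoneOn_or_antitoneOn_of_hasDerivWithinAt_ne_zero (hs : Convex ℝ s)
    (hf : ∀ x ∈ s, HasDerivWithinAt f (f' x) s x) (hf' : ∀ x ∈ s, f' x ≠ 0) :
    MonotoneOn f s ∨ AntitoneOn f s := by
  have hcont : ContinuousOn f s := fun x hx ↦ (hf x hx).continuousWithinAt
  have hf_int : ∀ x ∈ interior s, HasDerivWithinAt f (f' x) (interior s) x :=
    fun x hx ↦ (hf x (interior_subset hx)).mono interior_subset
  rcases hasDerivWithinAt_forall_lt_or_forall_gt_of_forall_ne hs hf hf' with hneg | hpos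
  · exact .inr (strictAntiOn_of_hasDerivWithinAt_neg hs hcont hf_int
      fun x hx ↦ hneg x (interior_subset hx)).antitoneOn
  · exact .inl (strictMonoOn_of_hasDerivWithinAt_pos hs hcont hf_int
      fun x hx ↦ hpos x (interior_subset hx)).monotoneOn

end DerivBoundedBelow

theorem volume_abs_lt_le_of_mul_sub_le_abs_sub {s : Set ℝ} {f : ℝ → ℝ} {c ρ : ℝ} (hc : 0 < c)
    (h : ∀ x ∈ s, ∀ y ∈ s, x ≤ y → c * (y - x) ≤ |f y - f x|) :
    volume {x ∈ s | |f x| < ρ} ≤ ENNReal.ofReal (2 * ρ / c) := by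
  have hclose : ∀ x ∈ {x ∈ s | |f x| < ρ}, ∀ y ∈ {x ∈ s | |f x| < ρ}, x ≤ y →
      y - x ≤ 2 * ρ / c := fun x hx y hy hxy ↦ by
    rw [le_div_iff₀ hc, mul_comm]
    linarith [h x hx.1 y hy.1 hxy, abs_sub (f y) (f x), hx.2, hy.2]
  refine (Real.volume_le_diam _).trans (Metric.ediam_le fun x hx y hy ↦ ?_)
  rw [edist_dist, Real.dist_eq]
  refine ENNReal.ofReal_le_ofReal ?_
  rcases le_total x y with hxy | hyx
  · rw [abs_sub_comm, abs_of_nonneg (sub_nonneg.2 hxy)]; exact hclose x hx y hy hxy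
  · rw [abs_of_nonneg (sub_nonneg.2 hyx)]; exact hclose y hy x hx hyx

theorem Convex.sep_le_of_monotoneOn_or_antitoneOn {s : Set ℝ} (hs : Convex ℝ s) {g : ℝ → ℝ}
    (hg : MonotoneOn g s ∨ AntitoneOn g s) (r : ℝ) : Convex ℝ {x ∈ s | r ≤ g x} :=
  hg.elim (fun h ↦ h.convex_ge hs r) (fun h ↦ h.convex_ge hs r)

/-- Van der Corput's sublevel set estimate, with `r` standing for `(ε / c) ^ (1 / k)`. -/
theorem volume_abs_lt_le_of_isDerivChainOn (k : ℕ) {s : Set ℝ} (hs : Convex ℝ s)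
    {F : ℕ → ℝ → ℝ} (hF : IsDerivChainOn F k s) {c r ε : ℝ} (hc : 0 < c) (hr : 0 < r)
    (hk : ∀ x ∈ s, c ≤ |F k x|) (hε : ε ≤ c * r ^ k) :
    volume {x ∈ s | |F 0 x| < ε} ≤ ENNReal.ofReal (4 ^ k * r) := by
  induction k generalizing s c with
  | zero =>
    rw [pow_zero, mul_one] at hε
    have : {x ∈ s | |F 0 x| < ε} = ∅ :=
      eq_empty_of_forall_notMem fun x hx ↦ by linarith [hk x hx.1, hx.2]
    simp [this]
  | succ k ih =>
    set ρ := c * r with hρ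
    have hderiv : ∀ x ∈ s, HasDerivWithinAt (F k) (F (k + 1) x) s x := hF k k.lt_succ_self
    have hsmall : volume {x ∈ s | |F k x| < ρ} ≤ ENNReal.ofReal (2 * r) := by
      refine (volume_abs_lt_le_of_mul_sub_le_abs_sub hc fun x hx y hy hxy ↦
        hs.mul_sub_le_abs_sub_of_le_abs_hasDerivWithinAt hc hderiv hk hx hy hxy).trans_eq ?_
      rw [hρ]; field_simp
    have hmono := hs.monotoneOn_or_antitoneOn_of_hasDerivWithinAt_ne_zero hderiv
      fun x hx ↦ abs_pos.1 (hc.trans_le (hk x hx))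
    have hlarge : ∀ g : ℝ → ℝ, (MonotoneOn g s ∨ AntitoneOn g s) → (∀ x ∈ s, g x ≤ |F k x|) →
        volume {x ∈ {x ∈ s | ρ ≤ g x} | |F 0 x| < ε} ≤ ENNReal.ofReal (4 ^ k * r) :=
      fun g hg hgF ↦ ih (hs.sep_le_of_monotoneOn_or_antitoneOn hg ρ)
        ((hF.of_le k.le_succ).mono (sep_subset _ _)) (mul_pos hc hr)
        (fun x hx ↦ hx.2.trans (hgF x hx.1)) (by rw [pow_succ] at hε; linarith)
    have hcover : {x ∈ s | |F 0 x| < ε} ⊆ {x ∈ s | |F k x| < ρ} ∪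
        ({x ∈ {x ∈ s | ρ ≤ F k x} | |F 0 x| < ε} ∪
          {x ∈ {x ∈ s | ρ ≤ -F k x} | |F 0 x| < ε}) := fun x hx ↦ by
      rcases lt_or_ge |F k x| ρ with h | h
      · exact .inl ⟨hx.1, h⟩
      · rcases le_abs.1 h with h | h
        exacts [.inr (.inl ⟨⟨hx.1, h⟩, hx.2⟩), .inr (.inr ⟨⟨hx.1, h⟩, hx.2⟩)]
    have h4 : 0 ≤ 4 ^ k * r := by positivity
    calc volume {x ∈ s | |F 0 x| < ε}
        ≤ ENNReal.ofReal (2 * r) + (ENNReal.ofReal (4 ^ k * r) + ENNReal.ofReal (4 ^ k * r)) := by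
          refine (measure_mono hcover).trans ((measure_union_le _ _).trans ?_)
          gcongr
          refine (measure_union_le _ _).trans (add_le_add (hlarge _ hmono fun x _ ↦ le_abs_self _)
            (hlarge _ (hmono.symm.imp AntitoneOn.neg MonotoneOn.neg) fun x _ ↦ neg_le_abs _))
      _ ≤ ENNReal.ofReal (4 ^ (k + 1) * r) := by
          rw [← ENNReal.ofReal_add h4 h4, ← ENNReal.ofReal_add (by positivity) (by positivity)]
          refine ENNReal.ofReal_le_ofReal ?_
          rw [pow_succ]
          nlinarith [one_le_pow₀ (M₀ := ℝ) (a := 4) (n := k) (by norm_num)]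

theorem exists_iteratedDerivWithin_ne_zero {f : ℝ → ℝ} {s : Set ℝ} {m : ℕ} {x : ℝ}
    (h : 0 < ∑ j ∈ Finset.Icc 1 m, |iteratedDerivWithin j f s x|) :
    ∃ j ∈ Finset.Icc 1 m, iteratedDerivWithin j f s x ≠ 0 := by
  obtain ⟨j, hj, hne⟩ := Finset.exists_ne_zero_of_sum_ne_zero h.ne'
  exact ⟨j, hj, abs_ne_zero.1 hne⟩

theorem sInf_image_lt_sSup_image_of_iteratedDerivWithin_ne_zero {f : ℝ → ℝ} {s : Set ℝ}
    (hs : IsCompact s) (hf : ContinuousOn f s) {x : ℝ} (hx : x ∈ s) {j : ℕ} (hj : j ≠ 0)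
    (hfj : iteratedDerivWithin j f s x ≠ 0) : sInf (f '' s) < sSup (f '' s) := by
  by_contra! hle
  have himage := hs.image_of_continuousOn hf
  have hconst : EqOn f (fun _ ↦ sInf (f '' s)) s := fun y hy ↦
    le_antisymm ((le_csSup himage.bddAbove (mem_image_of_mem f hy)).trans hle)
      (csInf_le himage.bddBelow (mem_image_of_mem f hy))
  rw [iteratedDerivWithin_congr hconst hx, iteratedDerivWithin_const, if_neg hj] at hfj
  exact hfj rfl

theorem ContDiffOn.exists_ball_le_abs_iteratedDerivWithin {f : ℝ → ℝ} {s : Set ℝ} {m : ℕ}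
    (hf : ContDiffOn ℝ m f s) (hs : UniqueDiffOn ℝ s) {y : ℝ} (hy : y ∈ s)
    (hnd : 0 < ∑ j ∈ Finset.Icc 1 m, |iteratedDerivWithin j f s y|) :
    ∃ j ∈ Finset.Icc 1 m, ∃ c > 0, ∃ r > 0,
      ∀ z ∈ s ∩ Metric.ball y r, c ≤ |iteratedDerivWithin j f s z| := by
  obtain ⟨j, hj, hne⟩ := exists_iteratedDerivWithin_ne_zero hnd
  have hcont : ContinuousWithinAt (fun z ↦ |iteratedDerivWithin j f s z|) s y :=
    (hf.continuousOn_iteratedDerivWithin (by exact_mod_cast (Finset.mem_Icc.1 hj).2) hs y hy).abs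
  obtain ⟨r, hr, hball⟩ := Metric.mem_nhdsWithin_iff.1
    (hcont.eventually (lt_mem_nhds (half_lt_self (abs_pos.2 hne))))
  exact ⟨j, hj, _, half_pos (abs_pos.2 hne), r, hr, fun z hz ↦ (hball ⟨hz.2, hz.1⟩).le⟩

theorem volume_abs_sub_lt_pow_le_of_le_abs_iteratedDerivWithin {f : ℝ → ℝ} {s t : Set ℝ}
    {m j : ℕ} (hf : ContDiffOn ℝ m f s) (hs : UniqueDiffOn ℝ s) (ht : Convex ℝ t) (hts : t ⊆ s)
    (hj : j ∈ Finset.Icc 1 m) {c : ℝ} (hc : 0 < c)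
    (hfj : ∀ z ∈ t, c ≤ |iteratedDerivWithin j f s z|) {a δ : ℝ} (hδ : 0 < δ) (hδ1 : δ ≤ 1) :
    volume {z ∈ t | |f z - a| < δ ^ m} ≤ ENNReal.ofReal (4 ^ j * (1 + c⁻¹) * δ) := by
  obtain ⟨hj1, hjm⟩ := Finset.mem_Icc.1 hj
  have hchain :=
    ((hf.sub (contDiffOn_const (c := a))).isDerivChainOn_iteratedDerivWithin hs).mono hts
  have hpow : δ ^ m ≤ c * ((1 + c⁻¹) * δ) ^ j := by
    have hK : 1 ≤ c * (1 + c⁻¹) ^ j := by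
      calc (1 : ℝ) ≤ c * (1 + c⁻¹) := by rw [mul_add, mul_inv_cancel₀ hc.ne']; linarith
        _ ≤ c * (1 + c⁻¹) ^ j := by
          gcongr; exact le_self_pow₀ (by simp [hc.le]) (by omega)
    calc δ ^ m ≤ δ ^ j := pow_le_pow_of_le_one hδ.le hδ1 hjm
      _ ≤ c * (1 + c⁻¹) ^ j * δ ^ j := le_mul_of_one_le_left (by positivity) hK
      _ = c * ((1 + c⁻¹) * δ) ^ j := by rw [mul_pow]; ring
  have := volume_abs_lt_le_of_isDerivChainOn j ht (hchain.of_le hjm) hc (by positivity)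
    (fun z hz ↦ by simpa [iteratedDerivWithin_sub_const (by omega : j ≠ 0)] using hfj z hz) hpow
  simpa [mul_assoc] using this

theorem ContDiffOn.exists_nhds_volume_abs_sub_lt_pow_le {f : ℝ → ℝ} {s : Set ℝ} {m : ℕ}
    (hf : ContDiffOn ℝ m f s) (hs : Convex ℝ s) (hs' : UniqueDiffOn ℝ s) {y : ℝ} (hy : y ∈ s)
    (hnd : 0 < ∑ j ∈ Finset.Icc 1 m, |iteratedDerivWithin j f s y|) :
    ∃ U ∈ 𝓝 y, ∃ C : ℝ≥0, ∀ a δ : ℝ, 0 < δ → δ ≤ 1 →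
      volume (s ∩ U ∩ {z | |f z - a| < δ ^ m}) ≤ C * ENNReal.ofReal δ := by
  obtain ⟨j, hj, c, hc, r, hr, hfj⟩ := hf.exists_ball_le_abs_iteratedDerivWithin hs' hy hnd
  refine ⟨Metric.ball y r, Metric.ball_mem_nhds y hr, (4 ^ j * (1 + c⁻¹)).toNNReal,
    fun a δ hδ hδ1 ↦ ?_⟩
  change _ ≤ ENNReal.ofReal _ * _
  rw [← ENNReal.ofReal_mul (by positivity)]
  exact volume_abs_sub_lt_pow_le_of_le_abs_iteratedDerivWithin hf hs'
    (hs.inter (convex_ball y r)) inter_subset_left hj hc hfj hδ hδ1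

theorem IsCompact.exists_forall_measure_inter_le {X ι : Type*} [TopologicalSpace X]
    [MeasurableSpace X] {μ : Measure X} {K : Set X} (hK : IsCompact K) (E : ι → Set X)
    (w : ι → ℝ≥0∞) (h : ∀ y ∈ K, ∃ U ∈ 𝓝 y, ∃ C : ℝ≥0, ∀ i, μ (K ∩ U ∩ E i) ≤ C * w i) :
    ∃ C : ℝ≥0, ∀ i, μ (K ∩ E i) ≤ C * w i := by
  choose! U hU C hC using h
  obtain ⟨t, htK, hcover⟩ := hK.elim_nhds_subcover U hU
  refine ⟨∑ y ∈ t, C y, fun i ↦ ?_⟩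
  calc μ (K ∩ E i) ≤ μ (⋃ y ∈ t, K ∩ U y ∩ E i) := measure_mono fun x hx ↦ by
        obtain ⟨y, hy, hxy⟩ := mem_iUnion₂.1 (hcover hx.1)
        exact mem_iUnion₂.2 ⟨y, hy, ⟨hx.1, hxy⟩, hx.2⟩
    _ ≤ ∑ y ∈ t, μ (K ∩ U y ∩ E i) := measure_biUnion_finset_le _ _
    _ ≤ ∑ y ∈ t, C y * w i := Finset.sum_le_sum fun y hy ↦ hC y (htK y hy) i
    _ = (∑ y ∈ t, C y : ℝ≥0) * w i := by rw [ENNReal.ofNNReal_finsetSum, Finset.sum_mul]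

theorem measure_estimate_local_general
    (m : ℕ) (L₁ L₂ : ℝ) (hL : L₁ < L₂)
    (v : ℝ → ℝ) (hv : ContDiffOn ℝ m v (Set.Icc L₁ L₂))
    (hnd : ∀ y ∈ Set.Icc L₁ L₂,
      0 < ∑ j ∈ Finset.Icc 1 m, |iteratedDerivWithin j v (Set.Icc L₁ L₂) y|) :
    sInf (v '' Set.Icc L₁ L₂) < sSup (v '' Set.Icc L₁ L₂) ∧
    ∀ lam ∈ Set.Icc (sInf (v '' Set.Icc L₁ L₂)) (sSup (v '' Set.Icc L₁ L₂)),
      ∃ δ₀ > 0, ∃ C > 0,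
        ∀ lam' : ℝ, |lam' - lam| < δ₀ ^ m →
          ∀ δ : ℝ, 0 < δ → δ ≤ δ₀ →
            volume {y ∈ Set.Icc L₁ L₂ | |v y - lam'| < δ ^ m} ≤ ENNReal.ofReal (C * δ) := by
  have hs : UniqueDiffOn ℝ (Icc L₁ L₂) := uniqueDiffOn_Icc hL
  have hL₁ : L₁ ∈ Icc L₁ L₂ := left_mem_Icc.2 hL.le
  obtain ⟨j, hj, hne⟩ := exists_iteratedDerivWithin_ne_zero (hnd L₁ hL₁)
  refine ⟨sInf_image_lt_sSup_image_of_iteratedDerivWithin_ne_zero isCompact_Icc hv.continuousOn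
    hL₁ (by have := (Finset.mem_Icc.1 hj).1; omega) hne, fun _ _ ↦ ?_⟩
  -- The estimate is uniform in `λ`, with `δ₀ = 1`; the index `(λ', δ)` ranges over `ℝ × (0, 1]`.
  obtain ⟨C, hC⟩ := isCompact_Icc.exists_forall_measure_inter_le (μ := volume)
    (fun p : ℝ × Ioc (0 : ℝ) 1 ↦ {y | |v y - p.1| < (p.2 : ℝ) ^ m})
    (fun p ↦ ENNReal.ofReal p.2) fun y hy ↦ by
      obtain ⟨U, hU, C, hC⟩ :=
        hv.exists_nhds_volume_abs_sub_lt_pow_le (convex_Icc L₁ L₂) hs hy (hnd y hy)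
      exact ⟨U, hU, C, fun p ↦ hC p.1 p.2 p.2.2.1 p.2.2.2⟩
  refine ⟨1, one_pos, C + 1, by positivity, fun lam' _ δ hδ hδ1 ↦ ?_⟩
  calc volume {y ∈ Icc L₁ L₂ | |v y - lam'| < δ ^ m}
      ≤ C * ENNReal.ofReal δ := hC (lam', ⟨δ, hδ, hδ1⟩)
    _ ≤ ENNReal.ofReal ((C + 1) * δ) := by
      rw [ENNReal.ofReal_mul (by positivity), ← ENNReal.ofReal_coe_nnreal]
      gcongr
      exact le_add_of_nonneg_right zero_le_one

/-- local-in-`λ` measure estimate for thickened level sets.  If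
`v ∈ C^m([L₁,L₂])` satisfies the `m`-th order non-degeneracy condition, then
`v₁ = min v < max v = v₂`, and for every `λ ∈ [v₁, v₂]` there are `δ₀(λ) > 0` and
`C(λ) > 0` such that for every `λ'` with `|λ' − λ| < δ₀(λ)^m` and every
`δ ∈ (0, δ₀(λ)]`, the set `E^m_{λ',δ} = {y ∈ [L₁,L₂] : |v(y) − λ'| < δ^m}` has
Lebesgue measure at most `C(λ) δ`. -/
theorem measure_estimate_local
    (m : ℕ) (hm : 1 ≤ m) (L₁ L₂ : ℝ) (hL : L₁ < L₂)
    (v : ℝ → ℝ) (hv : ContDiffOn ℝ m v (Set.Icc L₁ L₂))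
    (hnd : ∀ y ∈ Set.Icc L₁ L₂,
      0 < ∑ j ∈ Finset.Icc 1 m, |iteratedDerivWithin j v (Set.Icc L₁ L₂) y|) :
    sInf (v '' Set.Icc L₁ L₂) < sSup (v '' Set.Icc L₁ L₂) ∧
    ∀ lam ∈ Set.Icc (sInf (v '' Set.Icc L₁ L₂)) (sSup (v '' Set.Icc L₁ L₂)),
      ∃ δ₀ > 0, ∃ C > 0,
        ∀ lam' : ℝ, |lam' - lam| < δ₀ ^ m →
          ∀ δ : ℝ, 0 < δ → δ ≤ δ₀ →
            volume {y ∈ Set.Icc L₁ L₂ | |v y - lam'| < δ ^ m} ≤ ENNReal.ofReal (C * δ) :=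
  measure_estimate_local_general m L₁ L₂ hL v hv hnd
end

section
/- Let m ≥ 1 and L₁ < L₂ be real numbers, and let v : [L₁, L₂] → ℝ be a C^m function satisfying |v'(y)| + ⋯ + |v^{(m)}(y)| > 0 for all y ∈ [L₁, L₂]. Then there exist constants C₀ > 0 and δ̂₀ ∈ (0, 1) such that for every δ ∈ (0, δ̂₀] and every λ ∈ ℝ, the Lebesgue measure of E^m_{λ,δ} = {y ∈ [L₁, L₂] : |v(y) − λ| < δ^m} satisfies m(E^m_{λ,δ}) ≤ C₀ δ. -/
open Set MeasureTheory
open scoped ENNReal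

/-!
By the mean value theorem, if `|g'| ≥ c` on an interval then `{|g - μ| < c t}` lies in an
interval of length `4 t`. Applied to `g⁽ʲ⁻¹⁾` with `μ = 0`, this leaves two intervals on which
`|g⁽ʲ⁻¹⁾| ≥ c t`, and induction on `j` gives the van der Corput type bound
`m {|g - λ| < c tʲ} ≤ 4ʲ t` whenever `|g⁽ʲ⁾| ≥ c`. Non-degeneracy and compactness give
`c ∈ (0, 1]` and `r > 0` such that on every subinterval of `[L₁, L₂]` of length `< r` some
`|v⁽ʲ⁾|`, `1 ≤ j ≤ m`, stays above `c ≥ cʲ`. As `δᵐ ≤ δʲ = cʲ (δ / c)ʲ`, each of the finitely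
many pieces of a subdivision of `[L₁, L₂]` into such subintervals contributes at most `4ᵐ δ / c`.
-/

structure IsDerivChainOn_s13 (g : ℕ → ℝ → ℝ) (n : ℕ) (a b : ℝ) : Prop where
  continuousOn : ∀ i ≤ n, ContinuousOn (g i) (Icc a b)
  hasDerivAt : ∀ i < n, ∀ x ∈ Ioo a b, HasDerivAt (g i) (g (i + 1) x) x

theorem IsDerivChainOn_s13.mono {g : ℕ → ℝ → ℝ} {n k : ℕ} {a b a' b' : ℝ}
    (hg : IsDerivChainOn_s13 g n a b) (hk : k ≤ n) (ha : a ≤ a') (hb : b' ≤ b) :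
    IsDerivChainOn_s13 g k a' b' where
  continuousOn i hi := (hg.continuousOn i (hi.trans hk)).mono (Icc_subset_Icc ha hb)
  hasDerivAt i hi x hx := hg.hasDerivAt i (hi.trans_le hk) x (Ioo_subset_Ioo ha hb hx)

theorem ContDiffOn.isDerivChainOn_iteratedDerivWithin_s13 {f : ℝ → ℝ} {n : ℕ} {a b : ℝ}
    (hf : ContDiffOn ℝ n f (Icc a b)) (hab : a < b) :
    IsDerivChainOn_s13 (fun i => iteratedDerivWithin i f (Icc a b)) n a b where
  continuousOn i hi :=
    hf.continuousOn_iteratedDerivWithin (by exact_mod_cast hi) (uniqueDiffOn_Icc hab)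
  hasDerivAt i hi x hx := by
    have hdiff := hf.differentiableOn_iteratedDerivWithin (by exact_mod_cast hi)
      (uniqueDiffOn_Icc hab) x (Ioo_subset_Icc_self hx)
    rw [iteratedDerivWithin_succ]
    exact hdiff.hasDerivWithinAt.hasDerivAt (Icc_mem_nhds hx.1 hx.2)

theorem mul_abs_sub_le_abs_sub_of_le_abs_deriv {f f' : ℝ → ℝ} {a b c : ℝ}
    (hf : ContinuousOn f (Icc a b)) (hf' : ∀ x ∈ Ioo a b, HasDerivAt f (f' x) x)
    (hc : ∀ x ∈ Ioo a b, c ≤ |f' x|) {x y : ℝ} (hx : x ∈ Icc a b) (hy : y ∈ Icc a b) :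
    c * |y - x| ≤ |f y - f x| := by
  wlog hxy : x < y generalizing x y
  · rcases (not_lt.1 hxy).eq_or_lt with rfl | hyx
    · simp
    · simpa only [abs_sub_comm] using this hy hx hyx
  have hsub : Ioo x y ⊆ Ioo a b := Ioo_subset_Ioo hx.1 hy.2
  obtain ⟨ξ, hξ, hslope⟩ := exists_hasDerivAt_eq_slope f f' hxy
    (hf.mono (Icc_subset_Icc hx.1 hy.2)) fun z hz => hf' z (hsub hz)
  have hξc := hc ξ (hsub hξ)
  rw [abs_of_pos (sub_pos.2 hxy)]
  rwa [hslope, abs_div, abs_of_pos (sub_pos.2 hxy), le_div_iff₀ (sub_pos.2 hxy)] at hξc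

theorem exists_sublevel_subset_Ioo {f f' : ℝ → ℝ} {a b c : ℝ} (hab : a ≤ b) (hc₀ : 0 < c)
    (hf : ContinuousOn f (Icc a b)) (hf' : ∀ x ∈ Ioo a b, HasDerivAt f (f' x) x)
    (hc : ∀ x ∈ Ioo a b, c ≤ |f' x|) (μ t : ℝ) :
    ∃ z ∈ Icc a b, {x ∈ Icc a b | |f x - μ| < c * t} ⊆ Ioo (z - 2 * t) (z + 2 * t) := by
  by_cases hS : ∃ z ∈ Icc a b, |f z - μ| < c * t
  · obtain ⟨z, hz, hfz⟩ := hS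
    refine ⟨z, hz, fun x ⟨hx, hfx⟩ => ?_⟩
    have hmvt := mul_abs_sub_le_abs_sub_of_le_abs_deriv hf hf' hc hz hx
    have htri : |f x - f z| ≤ |f x - μ| + |f z - μ| := by
      simpa only [abs_sub_comm μ] using abs_sub_le (f x) μ (f z)
    have hxz : |x - z| < 2 * t := lt_of_mul_lt_mul_left (by linarith) hc₀.le
    rw [abs_sub_lt_iff] at hxz
    constructor <;> linarith
  · push Not at hS
    exact ⟨a, left_mem_Icc.2 hab, fun x hx => ((hS x hx.1).not_gt hx.2).elim⟩

theorem volume_sublevel_le_of_le_abs_deriv {f f' : ℝ → ℝ} {a b c : ℝ} (hc₀ : 0 < c)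
    (hf : ContinuousOn f (Icc a b)) (hf' : ∀ x ∈ Ioo a b, HasDerivAt f (f' x) x)
    (hc : ∀ x ∈ Ioo a b, c ≤ |f' x|) (μ t : ℝ) :
    volume {x ∈ Icc a b | |f x - μ| < c * t} ≤ ENNReal.ofReal (4 * t) := by
  rcases lt_or_ge b a with hba | hab
  · simp [Icc_eq_empty_of_lt hba]
  obtain ⟨z, -, hz⟩ := exists_sublevel_subset_Ioo hab hc₀ hf hf' hc μ t
  calc volume {x ∈ Icc a b | |f x - μ| < c * t}
      ≤ volume (Ioo (z - 2 * t) (z + 2 * t)) := measure_mono hz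
    _ = ENNReal.ofReal (4 * t) := by rw [Real.volume_Ioo]; ring_nf

theorem sep_Icc_subset_union (p : ℝ → Prop) (a b z u : ℝ) :
    {x ∈ Icc a b | p x} ⊆
      {x ∈ Icc a (z - u) | p x} ∪ Icc (z - u) (z + u) ∪ {x ∈ Icc (z + u) b | p x} := by
  rintro x ⟨hx, hpx⟩
  rcases le_or_gt x (z - u) with h₁ | h₁
  · exact Or.inl (Or.inl ⟨⟨hx.1, h₁⟩, hpx⟩)
  rcases le_or_gt (z + u) x with h₂ | h₂
  · exact Or.inr ⟨⟨h₂, hx.2⟩, hpx⟩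
  · exact Or.inl (Or.inr ⟨h₁.le, h₂.le⟩)

theorem volume_sublevel_le_of_le_abs {g : ℕ → ℝ → ℝ} {j : ℕ} (hj : 1 ≤ j) {t : ℝ} (ht : 0 < t)
    (lam : ℝ) {a b c : ℝ} (hc : 0 < c) (hg : IsDerivChainOn_s13 g j a b)
    (hlb : ∀ x ∈ Icc a b, c ≤ |g j x|) :
    volume {x ∈ Icc a b | |g 0 x - lam| < c * t ^ j} ≤ ENNReal.ofReal (4 ^ j * t) := by
  induction j, hj using Nat.le_induction generalizing a b c with
  | base =>
    simpa using volume_sublevel_le_of_le_abs_deriv hc (hg.continuousOn 0 zero_le_one)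
      (hg.hasDerivAt 0 zero_lt_one) (fun x hx => hlb x (Ioo_subset_Icc_self hx)) lam t
  | succ j hj ih =>
    rcases lt_or_ge b a with hba | hab
    · simp [Icc_eq_empty_of_lt hba]
    obtain ⟨z, hz, hzS⟩ := exists_sublevel_subset_Ioo hab hc (hg.continuousOn j j.le_succ)
      (hg.hasDerivAt j j.lt_succ_self) (fun x hx => hlb x (Ioo_subset_Icc_self hx)) 0 t
    have hfar : ∀ x ∈ Icc a b, x ∉ Ioo (z - 2 * t) (z + 2 * t) → c * t ≤ |g j x| :=
      fun x hx hxz => not_lt.1 fun h => hxz (hzS ⟨hx, by simpa using h⟩)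
    set p : ℝ → Prop := fun x => |g 0 x - lam| < c * t * t ^ j
    have hleft : volume {x ∈ Icc a (z - 2 * t) | p x} ≤ ENNReal.ofReal (4 ^ j * t) :=
      ih (mul_pos hc ht) (hg.mono j.le_succ le_rfl (by linarith [hz.2])) fun x hx =>
        hfar x ⟨hx.1, hx.2.trans (by linarith [hz.2])⟩ fun h => hx.2.not_gt h.1
    have hright : volume {x ∈ Icc (z + 2 * t) b | p x} ≤ ENNReal.ofReal (4 ^ j * t) :=
      ih (mul_pos hc ht) (hg.mono j.le_succ (by linarith [hz.1]) le_rfl) fun x hx =>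
        hfar x ⟨(by linarith [hz.1] : a ≤ z + 2 * t).trans hx.1, hx.2⟩ fun h => hx.1.not_gt h.2
    have h4 : (4 : ℝ) ≤ 4 ^ j := le_self_pow₀ (by norm_num) (by omega)
    calc volume {x ∈ Icc a b | |g 0 x - lam| < c * t ^ (j + 1)}
        ≤ volume {x ∈ Icc a (z - 2 * t) | p x} + volume (Icc (z - 2 * t) (z + 2 * t))
          + volume {x ∈ Icc (z + 2 * t) b | p x} := by
          rw [pow_succ', ← mul_assoc]
          exact (measure_mono (sep_Icc_subset_union p a b z (2 * t))).trans <|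
            (measure_union_le _ _).trans (add_le_add_left (measure_union_le _ _) _)
      _ ≤ ENNReal.ofReal (4 ^ j * t) + ENNReal.ofReal (4 * t) + ENNReal.ofReal (4 ^ j * t) := by
          rw [Real.volume_Icc]
          gcongr
          linarith
      _ = ENNReal.ofReal (4 ^ j * t + 4 * t + 4 ^ j * t) := by
          rw [ENNReal.ofReal_add, ENNReal.ofReal_add] <;> positivity
      _ ≤ ENNReal.ofReal (4 ^ (j + 1) * t) := by
          gcongr
          rw [pow_succ]
          nlinarith

theorem volume_sublevel_pow_le {g : ℕ → ℝ → ℝ} {a b c δ lam : ℝ} {j m : ℕ} (hj : 1 ≤ j)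
    (hjm : j ≤ m) (hc : 0 < c) (hc₁ : c ≤ 1) (hδ : 0 < δ) (hδ₁ : δ ≤ 1)
    (hg : IsDerivChainOn_s13 g j a b) (hlb : ∀ x ∈ Icc a b, c ≤ |g j x|) :
    volume {x ∈ Icc a b | |g 0 x - lam| < δ ^ m} ≤ ENNReal.ofReal (4 ^ m / c * δ) :=
  calc volume {x ∈ Icc a b | |g 0 x - lam| < δ ^ m}
      ≤ volume {x ∈ Icc a b | |g 0 x - lam| < c ^ j * (δ / c) ^ j} := by
        refine measure_mono fun x hx => ⟨hx.1, hx.2.trans_le ?_⟩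
        rw [← mul_pow, mul_div_cancel₀ _ hc.ne']
        exact pow_le_pow_of_le_one hδ.le hδ₁ hjm
    _ ≤ ENNReal.ofReal (4 ^ j * (δ / c)) :=
        volume_sublevel_le_of_le_abs hj (div_pos hδ hc) lam (pow_pos hc j) hg fun x hx =>
          (pow_le_of_le_one hc.le hc₁ (by omega)).trans (hlb x hx)
    _ ≤ ENNReal.ofReal (4 ^ m / c * δ) := by
        rw [mul_div_assoc', div_mul_eq_mul_div]
        gcongr
        norm_num

theorem IsCompact.exists_forall_exists_le_abs {X ι : Type*} [PseudoMetricSpace X] {K : Set X}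
    (hK : IsCompact K) {s : Finset ι} {f : ι → X → ℝ} (hf : ∀ i ∈ s, ContinuousOn (f i) K)
    (hpos : ∀ y ∈ K, 0 < ∑ i ∈ s, |f i y|) :
    ∃ c > 0, ∃ r > 0, ∀ y ∈ K, ∃ i ∈ s, ∀ x ∈ K, dist x y < r → c ≤ |f i x| := by
  obtain ⟨μ, hμ, hμK⟩ := hK.exists_forall_le'
    (continuousOn_finsetSum s fun i hi => (hf i hi).abs) hpos
  set c := μ / (2 * (s.card + 1))
  have hc : 0 < c := by positivity
  have hpigeon : ∀ y ∈ K, ∃ i ∈ s, 2 * c < |f i y| := fun y hy =>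
    Finset.exists_lt_of_sum_lt <| calc
      ∑ i ∈ s, 2 * c = s.card * μ / (s.card + 1) := by
          simp only [c, Finset.sum_const, nsmul_eq_mul]
          field_simp
      _ < μ := by rw [div_lt_iff₀ (by positivity)]; linarith
      _ ≤ ∑ i ∈ s, |f i y| := hμK y hy
  have hunif : UniformContinuousOn (fun y (i : s) => f i y) K :=
    hK.uniformContinuousOn_of_continuous (continuousOn_pi.2 fun i => hf i i.2)
  obtain ⟨r, hr, hr'⟩ := Metric.uniformContinuousOn_iff.1 hunif c hc
  refine ⟨c, hc, r, hr, fun y hy => ?_⟩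
  obtain ⟨i, hi, hiy⟩ := hpigeon y hy
  refine ⟨i, hi, fun x hx hxy => ?_⟩
  have hclose : |f i x - f i y| < c :=
    (dist_le_pi_dist (fun i : s => f i x) (fun i : s => f i y) ⟨i, hi⟩).trans_lt (hr' x hx y hy hxy)
  linarith [abs_sub_abs_le_abs_sub (f i y) (f i x), abs_sub_comm (f i x) (f i y)]

theorem Icc_subset_biUnion_Icc {X : Type*} [LinearOrder X] (N : ℕ) (a : ℕ → X) :
    Icc (a 0) (a (N + 1)) ⊆ ⋃ i ∈ Finset.range (N + 1), Icc (a i) (a (i + 1)) := by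
  induction N with
  | zero => simp
  | succ N ih => calc
    _ ⊆ Icc (a 0) (a (N + 1)) ∪ Icc (a (N + 1)) (a (N + 2)) := Icc_subset_Icc_union_Icc
    _ ⊆ _ := by simpa [Finset.range_add_one] using
                  union_subset_union_right (Icc (a (N + 1)) (a (N + 2))) ih

theorem volume_sep_Icc_le_of_forall_short_Icc {p : ℝ → Prop} {a b r : ℝ} {B : ℝ≥0∞} {N : ℕ}
    (hr : 0 < r) (hN : (b - a) / r < N)
    (hB : ∀ x y, a ≤ x → x ≤ y → y ≤ b → y - x < r → volume {z ∈ Icc x y | p z} ≤ B) :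
    volume {z ∈ Icc a b | p z} ≤ N * B := by
  rcases lt_or_ge b a with hba | hab
  · simp [Icc_eq_empty_of_lt hba]
  have hN₀ : (0 : ℝ) < N := (div_nonneg (sub_nonneg.2 hab) hr.le).trans_lt hN
  obtain ⟨n, rfl⟩ : ∃ n, N = n + 1 := Nat.exists_eq_succ_of_ne_zero (Nat.cast_pos.1 hN₀).ne'
  set h := (b - a) / (n + 1 : ℕ)
  have hh : 0 ≤ h := by positivity
  have hhr : h < r := by rwa [div_lt_iff₀ hN₀, mul_comm, ← div_lt_iff₀ hr]
  set q : ℕ → ℝ := fun k => a + k * h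
  have hq : ∀ k, q (k + 1) = q k + h := fun k => by push_cast [q]; ring
  have hqa : ∀ k, a ≤ q k := fun k => le_add_of_nonneg_right (by positivity)
  have hqN : q (n + 1) = b := by simp only [q, h]; rw [mul_div_cancel₀ _ hN₀.ne']; ring
  have hqb : ∀ k ≤ n + 1, q k ≤ b := fun k hk => by rw [← hqN]; simp only [q]; gcongr
  have hcover : {z ∈ Icc a b | p z} ⊆
      ⋃ k ∈ Finset.range (n + 1), {z ∈ Icc (q k) (q (k + 1)) | p z} := by
    rintro z ⟨hz, hpz⟩
    rw [← hqN, show a = q 0 by simp [q]] at hz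
    obtain ⟨k, hk, hzk⟩ := mem_iUnion₂.1 (Icc_subset_biUnion_Icc n q hz)
    exact mem_biUnion hk ⟨hzk, hpz⟩
  calc volume {z ∈ Icc a b | p z}
      ≤ ∑ k ∈ Finset.range (n + 1), volume {z ∈ Icc (q k) (q (k + 1)) | p z} :=
        (measure_mono hcover).trans (measure_biUnion_finset_le _ _)
    _ ≤ ∑ k ∈ Finset.range (n + 1), B := Finset.sum_le_sum fun k hk =>
        hB _ _ (hqa k) (by rw [hq]; linarith) (hqb _ (Finset.mem_range.1 hk))
          (by rw [hq]; linarith)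
    _ = (n + 1 : ℕ) * B := by simp

theorem measure_estimate_uniform_general
    (m : ℕ) (L₁ L₂ : ℝ) (hL : L₁ < L₂)
    (v : ℝ → ℝ) (hv : ContDiffOn ℝ m v (Set.Icc L₁ L₂))
    (hnd : ∀ y ∈ Set.Icc L₁ L₂,
      0 < ∑ j ∈ Finset.Icc 1 m, |iteratedDerivWithin j v (Set.Icc L₁ L₂) y|) :
    ∃ C₀ > 0, ∃ δ₀ : ℝ, 0 < δ₀ ∧ δ₀ < 1 ∧
      ∀ δ : ℝ, 0 < δ → δ ≤ δ₀ → ∀ lam : ℝ,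
        volume {y ∈ Set.Icc L₁ L₂ | |v y - lam| < δ ^ m} ≤ ENNReal.ofReal (C₀ * δ) := by
  have hg := hv.isDerivChainOn_iteratedDerivWithin_s13 hL
  obtain ⟨c, hc, r, hr, hlb⟩ := isCompact_Icc.exists_forall_exists_le_abs
    (fun j hj => hg.continuousOn j (Finset.mem_Icc.1 hj).2) hnd
  obtain ⟨N, hN⟩ := exists_nat_gt ((L₂ - L₁) / r)
  have hc₁ : 0 < min c 1 := lt_min hc one_pos
  refine ⟨N * (4 ^ m / min c 1), ?_, 1 / 2, by norm_num, by norm_num, fun δ hδ hδ₀ lam => ?_⟩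
  · have : (0 : ℝ) < N := (div_pos (sub_pos.2 hL) hr).trans hN
    positivity
  calc volume {y ∈ Icc L₁ L₂ | |v y - lam| < δ ^ m}
      ≤ N * ENNReal.ofReal (4 ^ m / min c 1 * δ) := by
        refine volume_sep_Icc_le_of_forall_short_Icc hr hN fun x y hx hxy hy hyx => ?_
        obtain ⟨j, hj, hjx⟩ := hlb x ⟨hx, hxy.trans hy⟩
        obtain ⟨hj₁, hjm⟩ := Finset.mem_Icc.1 hj
        simpa only [iteratedDerivWithin_zero] using volume_sublevel_pow_le (lam := lam) hj₁ hjm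
          hc₁ (min_le_right _ _) hδ (by linarith) (hg.mono hjm hx hy) fun z hz =>
            (min_le_left _ _).trans <| hjx z ⟨hx.trans hz.1, hz.2.trans hy⟩ <| by
              rw [Real.dist_eq, abs_of_nonneg (by linarith [hz.1])]; linarith [hz.2]
    _ = ENNReal.ofReal (N * (4 ^ m / min c 1) * δ) := by
        rw [mul_assoc, ENNReal.ofReal_mul (Nat.cast_nonneg _), ENNReal.ofReal_natCast]

/-- uniform-in-`λ` measure estimate for `E^m_{λ,δ}` on a compact
interval.  If `v ∈ C^m([L₁,L₂])` satisfies the `m`-th order non-degeneracy condition,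
then there are `C₀ > 0` and `δ̂₀ ∈ (0,1)` such that for every `δ ∈ (0, δ̂₀]` and every
`λ ∈ ℝ`, `m(E^m_{λ,δ}) ≤ C₀ δ`, where `E^m_{λ,δ} = {y ∈ [L₁,L₂] : |v(y) − λ| < δ^m}`. -/
theorem measure_estimate_uniform
    (m : ℕ) (hm : 1 ≤ m) (L₁ L₂ : ℝ) (hL : L₁ < L₂)
    (v : ℝ → ℝ) (hv : ContDiffOn ℝ m v (Set.Icc L₁ L₂))
    (hnd : ∀ y ∈ Set.Icc L₁ L₂,
      0 < ∑ j ∈ Finset.Icc 1 m, |iteratedDerivWithin j v (Set.Icc L₁ L₂) y|) :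
    ∃ C₀ > 0, ∃ δ₀ : ℝ, 0 < δ₀ ∧ δ₀ < 1 ∧
      ∀ δ : ℝ, 0 < δ → δ ≤ δ₀ → ∀ lam : ℝ,
        volume {y ∈ Set.Icc L₁ L₂ | |v y - lam| < δ ^ m} ≤ ENNReal.ofReal (C₀ * δ) :=
  measure_estimate_uniform_general m L₁ L₂ hL v hv hnd
end

section
/- Let Ω be one of ℝ, (-∞, L₁), or (L₂, ∞), let m ∈ ℕ*, and let v : cl(Ω) → ℝ be a C^m function satisfying |v'(y)| + |v''(y)| + ⋯ + |v^{(m)}(y)| > 0 for all y ∈ cl(Ω) and liminf_{|y|→∞} |v'(y)| ≥ c₀ for some c₀ > 0. Then there exist constants C > 0 and δ₀ > 0 such that for every λ ∈ ℝ and every δ ∈ (0, δ₀], the Lebesgue measure of the δ-neighborhood 𝓔^m_{λ,δ} = {y ∈ Ω : dist(y, E^m_{λ,δ}) < δ} of E^m_{λ,δ} = {y ∈ Ω : |v(y) − λ| < δ^m} satisfies m(𝓔^m_{λ,δ}) ≤ C δ. -/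
/-!
The zeros of `v'` in `cl Ω` are isolated, by the non-degeneracy condition, and lie in a compact
set, by the condition at infinity, so there are finitely many of them. Near a zero whose first
non-vanishing derivative has order `k ≤ m`, `|v'|` grows like `|y - z| ^ (k - 1)`; by compactness
`|v'(y)| ≥ c ρ ^ (m - 1)` whenever `ρ ≤ 1` and `y` is at distance at least `ρ` from every zero.
Hence two points of `E^m_{λ,δ}` not separated by a zero are `O(δ)` apart, since otherwise `v`
would vary by more than `2 δ ^ m` between them. Cut at the zeros, `E^m_{λ,δ}` is a bounded number
of pieces of diameter `O(δ)`, and so is its `δ`-neighbourhood.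
-/

open Set MeasureTheory Filter ENNReal Metric

section Comparison

variable {f f' φ φ' : ℝ → ℝ} {a b p q : ℝ}

theorem sub_le_sub_of_le_deriv_of_deriv_pos (hap : a ≤ p) (hpq : p ≤ q) (hqb : q ≤ b)
    (hf : ContinuousOn f (Icc a b)) (hf' : ∀ x ∈ Ioo a b, HasDerivAt f (f' x) x)
    (hpos : ∀ x ∈ Ioo a b, 0 < f' x) (hφ : ContinuousOn φ (Icc p q))
    (hφ' : ∀ x ∈ Ioo p q, HasDerivAt φ (φ' x) x) (hle : ∀ x ∈ Ioo p q, φ' x ≤ f' x) :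
    φ q - φ p ≤ f b - f a := by
  have hsub : Ioo p q ⊆ Ioo a b := Ioo_subset_Ioo hap hqb
  have hfmono : MonotoneOn f (Icc a b) := by
    refine monotoneOn_of_hasDerivWithinAt_nonneg (f' := f') (convex_Icc a b) hf ?_ ?_ <;>
      rw [interior_Icc]
    exacts [fun x hx => (hf' x hx).hasDerivWithinAt, fun x hx => (hpos x hx).le]
  have hdiff : MonotoneOn (fun x => f x - φ x) (Icc p q) := by
    refine monotoneOn_of_hasDerivWithinAt_nonneg (f' := fun x => f' x - φ' x) (convex_Icc p q)
      ((hf.mono (Icc_subset_Icc hap hqb)).sub hφ) ?_ ?_ <;> rw [interior_Icc]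
    exacts [fun x hx => ((hf' x (hsub hx)).sub (hφ' x hx)).hasDerivWithinAt,
      fun x hx => sub_nonneg.2 (hle x hx)]
  have hp : p ∈ Icc a b := ⟨hap, hpq.trans hqb⟩
  have hq : q ∈ Icc a b := ⟨hap.trans hpq, hqb⟩
  have h₁ := hfmono ⟨le_rfl, hap.trans (hpq.trans hqb)⟩ hp hap
  have h₂ := hfmono hq ⟨hap.trans (hpq.trans hqb), le_rfl⟩ hqb
  have h₃ := hdiff (left_mem_Icc.2 hpq) (right_mem_Icc.2 hpq) hpq
  simp only at h₃
  linarith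

theorem sub_le_abs_sub_of_le_abs_deriv (hap : a ≤ p) (hpq : p ≤ q) (hqb : q ≤ b)
    (hf : ContinuousOn f (Icc a b)) (hf' : ∀ x ∈ Ioo a b, HasDerivAt f (f' x) x)
    (hne : ∀ x ∈ Ioo a b, f' x ≠ 0) (hφ : ContinuousOn φ (Icc p q))
    (hφ' : ∀ x ∈ Ioo p q, HasDerivAt φ (φ' x) x) (hle : ∀ x ∈ Ioo p q, φ' x ≤ |f' x|) :
    φ q - φ p ≤ |f b - f a| := by
  have hsub : Ioo p q ⊆ Ioo a b := Ioo_subset_Ioo hap hqb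
  rcases hasDerivWithinAt_forall_lt_or_forall_gt_of_forall_ne (convex_Ioo a b)
    (fun x hx => (hf' x hx).hasDerivWithinAt) hne with hneg | hpos
  · have := sub_le_sub_of_le_deriv_of_deriv_pos hap hpq hqb hf.neg (fun x hx => (hf' x hx).neg)
      (fun x hx => neg_pos.2 (hneg x hx)) hφ hφ'
      (fun x hx => (hle x hx).trans_eq (abs_of_neg (hneg x (hsub hx))))
    rw [abs_sub_comm]
    exact this.trans (by simpa only [Pi.neg_apply, neg_sub_neg] using le_abs_self (f a - f b))
  · exact (sub_le_sub_of_le_deriv_of_deriv_pos hap hpq hqb hf hf' hpos hφ hφ'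
      (fun x hx => (hle x hx).trans_eq (abs_of_pos (hpos x (hsub hx))))).trans (le_abs_self _)

end Comparison

section LocalGrowth

variable {s : Set ℝ} {z r : ℝ}

theorem Set.OrdConnected.Ioo_subset_interior (hs : s.OrdConnected) {a b : ℝ} (ha : a ∈ s)
    (hb : b ∈ s) : Ioo a b ⊆ interior s :=
  interior_Icc (a := a) (b := b) ▸ interior_mono (hs.out ha hb)

theorem hasDerivAt_div_mul_sub_pow_succ (κ z : ℝ) (i : ℕ) (x : ℝ) :
    HasDerivAt (fun x => κ / (i + 1) * (x - z) ^ (i + 1)) (κ * (x - z) ^ i) x := by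
  refine (((hasDerivAt_id' x).sub_const z).pow (i + 1)).const_mul (κ / (i + 1)) |>.congr_deriv ?_
  field_simp
  push_cast
  ring

theorem hasDerivAt_neg_div_mul_sub_pow_succ (κ z : ℝ) (i : ℕ) (x : ℝ) :
    HasDerivAt (fun x => -(κ / (i + 1) * (z - x) ^ (i + 1))) (κ * (z - x) ^ i) x := by
  refine ((((hasDerivAt_id' x).const_sub z).pow (i + 1)).const_mul (κ / (i + 1))).neg
    |>.congr_deriv ?_
  field_simp
  push_cast
  ring

theorem mul_pow_succ_div_le_abs_of_mul_pow_le_abs_deriv (hs : s.OrdConnected) {f f' : ℝ → ℝ}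
    {κ : ℝ} {i : ℕ} (hf : ContinuousOn f s) (hf' : ∀ x ∈ interior s, HasDerivAt f (f' x) x)
    (hz : z ∈ s) (hfz : f z = 0) (hκ : 0 < κ)
    (hbound : ∀ y ∈ s, |y - z| < r → κ * |y - z| ^ i ≤ |f' y|) :
    ∀ y ∈ s, |y - z| < r → κ / (i + 1) * |y - z| ^ (i + 1) ≤ |f y| := by
  have hne : ∀ x ∈ s, |x - z| < r → x ≠ z → f' x ≠ 0 := fun x hx hxr hxz h0 => by
    have := hbound x hx hxr
    rw [h0, abs_zero] at this
    have : 0 < κ * |x - z| ^ i := by have := abs_pos.2 (sub_ne_zero.2 hxz); positivity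
    linarith
  intro y hy hyr
  rcases lt_trichotomy y z with hyz | rfl | hzy
  · have hmem : ∀ x ∈ Ioo y z, x ∈ s ∧ |x - z| < r ∧ |x - z| = z - x := fun x hx => by
      have hx' : |x - z| = z - x := by rw [abs_sub_comm, abs_of_pos (sub_pos.2 hx.2)]
      refine ⟨hs.out hy hz (Ioo_subset_Icc_self hx), ?_, hx'⟩
      rw [abs_sub_comm, abs_of_pos (sub_pos.2 hyz)] at hyr
      linarith [hx.1]
    have hφ := hasDerivAt_neg_div_mul_sub_pow_succ κ z i
    have key := sub_le_abs_sub_of_le_abs_deriv le_rfl hyz.le le_rfl (hf.mono (hs.out hy hz))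
      (fun x hx => hf' x (hs.Ioo_subset_interior hy hz hx))
      (fun x hx => hne x (hmem x hx).1 (hmem x hx).2.1 hx.2.ne)
      (fun x _ => (hφ x).continuousAt.continuousWithinAt) (fun x _ => hφ x) (fun x hx => by
        have := hbound x (hmem x hx).1 (hmem x hx).2.1
        rwa [(hmem x hx).2.2] at this)
    rw [hfz, zero_sub, abs_neg, sub_self, zero_pow (Nat.succ_ne_zero i)] at key
    rw [abs_sub_comm, abs_of_pos (sub_pos.2 hyz)]
    linarith
  · simp
  · have hmem : ∀ x ∈ Ioo z y, x ∈ s ∧ |x - z| < r ∧ |x - z| = x - z := fun x hx => by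
      have hx' : |x - z| = x - z := abs_of_pos (sub_pos.2 hx.1)
      refine ⟨hs.out hz hy (Ioo_subset_Icc_self hx), ?_, hx'⟩
      rw [abs_of_pos (sub_pos.2 hzy)] at hyr
      linarith [hx.2]
    have hφ := hasDerivAt_div_mul_sub_pow_succ κ z i
    have key := sub_le_abs_sub_of_le_abs_deriv le_rfl hzy.le le_rfl (hf.mono (hs.out hz hy))
      (fun x hx => hf' x (hs.Ioo_subset_interior hz hy hx))
      (fun x hx => hne x (hmem x hx).1 (hmem x hx).2.1 hx.1.ne')
      (fun x _ => (hφ x).continuousAt.continuousWithinAt) (fun x _ => hφ x) (fun x hx => by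
        have := hbound x (hmem x hx).1 (hmem x hx).2.1
        rwa [(hmem x hx).2.2] at this)
    rw [hfz, sub_zero, sub_self, zero_pow (Nat.succ_ne_zero i)] at key
    rw [abs_of_pos (sub_pos.2 hzy)]
    linarith

theorem mul_pow_div_factorial_le_abs (hs : s.OrdConnected) (hz : z ∈ s) {ε : ℝ} (hε : 0 < ε) :
    ∀ (i : ℕ) (F : ℕ → ℝ → ℝ), (∀ j < i, ContinuousOn (F j) s) →
      (∀ j < i, ∀ x ∈ interior s, HasDerivAt (F j) (F (j + 1) x) x) → (∀ j < i, F j z = 0) →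
      (∀ y ∈ s, |y - z| < r → ε ≤ |F i y|) →
      ∀ y ∈ s, |y - z| < r → ε / i.factorial * |y - z| ^ i ≤ |F 0 y| := by
  intro i
  induction i with
  | zero => intro F _ _ _ hbound; simpa using hbound
  | succ i ih =>
    intro F hcont hderiv hzero hbound
    have hF1 := ih (fun j => F (j + 1)) (fun j hj => hcont (j + 1) (by omega))
      (fun j hj => hderiv (j + 1) (by omega)) (fun j hj => hzero (j + 1) (by omega)) hbound
    have := mul_pow_succ_div_le_abs_of_mul_pow_le_abs_deriv hs (hcont 0 (by omega))
      (hderiv 0 (by omega)) hz (hzero 0 (by omega)) (by positivity) hF1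
    rw [Nat.factorial_succ, Nat.cast_mul, mul_comm, ← div_div]
    push_cast
    exact this

end LocalGrowth

section IteratedDeriv

variable {s : Set ℝ} {v : ℝ → ℝ} {m : ℕ}

theorem ContDiffOn.hasDerivAt_iteratedDerivWithin (hv : ContDiffOn ℝ m v s)
    (hs : UniqueDiffOn ℝ s) {j : ℕ} (hj : j < m) {x : ℝ} (hx : x ∈ interior s) :
    HasDerivAt (iteratedDerivWithin j v s) (iteratedDerivWithin (j + 1) v s x) x := by
  have hnhds : s ∈ nhds x := mem_interior_iff_mem_nhds.1 hx
  have hdiff := (hv.differentiableOn_iteratedDerivWithin (by exact_mod_cast hj) hs x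
    (interior_subset hx)).differentiableAt hnhds
  rw [iteratedDerivWithin_succ, derivWithin_of_mem_nhds hnhds]
  exact hdiff.hasDerivAt

/-- If `k = i + 1` is the first order with `v⁽ᵏ⁾ z ≠ 0`, integrate `|v⁽ᵏ⁾| ≥ ε` `i` times. -/
theorem exists_mul_pow_le_abs_derivWithin (hsc : s.OrdConnected) (hs : UniqueDiffOn ℝ s)
    {n : ℕ} (hv : ContDiffOn ℝ (n + 1) v s) {z : ℝ} (hz : z ∈ s)
    (hnd : 0 < ∑ j ∈ Finset.Icc 1 (n + 1), |iteratedDerivWithin j v s z|) :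
    ∃ r > 0, ∃ c > 0, ∀ y ∈ s, |y - z| < r → c * |y - z| ^ n ≤ |derivWithin v s y| := by
  classical
  have hex : ∃ i, i ≤ n ∧ iteratedDerivWithin (i + 1) v s z ≠ 0 := by
    obtain ⟨k, hk, hk0⟩ := Finset.exists_ne_zero_of_sum_ne_zero hnd.ne'
    obtain ⟨hk1, hkn⟩ := Finset.mem_Icc.1 hk
    exact ⟨k - 1, by omega, by rw [Nat.sub_add_cancel hk1]; exact abs_ne_zero.1 hk0⟩
  set i := Nat.find hex
  obtain ⟨hin, hi0⟩ := Nat.find_spec hex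
  have hzero : ∀ j < i, iteratedDerivWithin (j + 1) v s z = 0 := fun j hj => by
    by_contra h
    exact Nat.find_min hex hj ⟨by omega, h⟩
  set ε := |iteratedDerivWithin (i + 1) v s z| / 2 with hεdef
  have hε : 0 < ε := by positivity
  obtain ⟨r, hr, hball⟩ := Metric.continuousWithinAt_iff.1
    (hv.continuousOn_iteratedDerivWithin (by exact_mod_cast (show i + 1 ≤ n + 1 by omega)) hs
      z hz) ε hε
  have hbound : ∀ y ∈ s, |y - z| < r → ε ≤ |iteratedDerivWithin (i + 1) v s y| := by
    intro y hy hyr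
    have := hball hy hyr
    rw [Real.dist_eq] at this
    have := abs_sub_abs_le_abs_sub (iteratedDerivWithin (i + 1) v s z)
      (iteratedDerivWithin (i + 1) v s y)
    rw [abs_sub_comm] at this
    linarith [hεdef]
  have key := mul_pow_div_factorial_le_abs hsc hz hε i (fun j => iteratedDerivWithin (j + 1) v s)
    (fun j hj => hv.continuousOn_iteratedDerivWithin
      (by exact_mod_cast (show j + 1 ≤ n + 1 by omega)) hs)
    (fun j hj x hx => hv.hasDerivAt_iteratedDerivWithin hs
      (by exact_mod_cast (show j + 1 < n + 1 by omega)) hx)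
    hzero hbound
  refine ⟨min r 1, by positivity, ε / i.factorial, by positivity, fun y hy hyr => ?_⟩
  have hy1 : |y - z| ≤ 1 := (hyr.trans_le (min_le_right _ _)).le
  calc ε / i.factorial * |y - z| ^ n ≤ ε / i.factorial * |y - z| ^ i :=
        mul_le_mul_of_nonneg_left (pow_le_pow_of_le_one (abs_nonneg _) hy1 hin) (by positivity)
    _ ≤ |derivWithin v s y| := by
        simpa using key y hy (hyr.trans_le (min_le_left _ _))

end IteratedDeriv

section ZerosOfDerivative

variable {s : Set ℝ} {g : ℝ → ℝ} {n : ℕ} {c κ : ℝ}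

def LowerBoundAwayFromZeros (s : Set ℝ) (g : ℝ → ℝ) (n : ℕ) (c y : ℝ) : Prop :=
  ∀ ρ, 0 < ρ → ρ ≤ 1 → (∀ z ∈ s, g z = 0 → ρ ≤ |y - z|) → c * ρ ^ n ≤ |g y|

theorem LowerBoundAwayFromZeros.mono {c' y : ℝ} (h : LowerBoundAwayFromZeros s g n c y)
    (hc' : c' ≤ c) : LowerBoundAwayFromZeros s g n c' y := fun ρ hρ hρ1 hρZ =>
  (mul_le_mul_of_nonneg_right hc' (by positivity)).trans (h ρ hρ hρ1 hρZ)

theorem lowerBoundAwayFromZeros_of_le_abs {y : ℝ} (hc : 0 ≤ c) (h : c ≤ |g y|) :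
    LowerBoundAwayFromZeros s g n c y := fun _ hρ hρ1 _ =>
  (mul_le_of_le_one_right hc (pow_le_one₀ hρ.le hρ1)).trans h

theorem exists_isCompact_forall_notMem_of_eventually_cocompact {p : ℝ → Prop}
    (h : ∀ᶠ y in cocompact ℝ ⊓ 𝓟 s, p y) : ∃ K, IsCompact K ∧ ∀ y ∈ s, y ∉ K → p y := by
  rw [eventually_inf_principal] at h
  obtain ⟨K, hK, hKc⟩ := hasBasis_cocompact.eventually_iff.1 h
  exact ⟨K, hK, fun y hy hyK => hKc hyK hy⟩

theorem ContinuousOn.eventually_half_abs_lt_abs (hg : ContinuousOn g s) {x : ℝ} (hx : x ∈ s)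
    (hgx : g x ≠ 0) : ∀ᶠ y in nhdsWithin x s, |g x| / 2 < |g y| :=
  (hg x hx).abs.eventually_const_lt (half_lt_self (abs_pos.2 hgx))

theorem finite_setOf_mem_and_eq_zero (hs : IsClosed s) (hg : ContinuousOn g s)
    (hzero : ∀ z ∈ s, g z = 0 → ∃ r > 0, ∃ c > 0, ∀ y ∈ s, |y - z| < r →
      c * |y - z| ^ n ≤ |g y|)
    (hκ : 0 < κ) (hinf : ∀ᶠ y in cocompact ℝ ⊓ 𝓟 s, κ ≤ |g y|) :
    {z ∈ s | g z = 0}.Finite := by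
  set Z := {z ∈ s | g z = 0}
  obtain ⟨K, hK, hKc⟩ := exists_isCompact_forall_notMem_of_eventually_cocompact hinf
  have hZK : Z ⊆ s ∩ K := fun z hz => ⟨hz.1, by
    by_contra hzK
    have := hKc z hz.1 hzK
    rw [hz.2, abs_zero] at this
    linarith⟩
  suffices ((s ∩ K) ∩ Z).Finite by rwa [inter_eq_right.2 hZK] at this
  refine (hK.inter_left hs).induction_on (p := fun t => (t ∩ Z).Finite) (by simp)
    (fun t t' htt' ht' => ht'.subset (inter_subset_inter_left _ htt'))
    (fun t t' ht ht' => by rw [union_inter_distrib_right]; exact ht.union ht') ?_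
  intro x hx
  by_cases hgx : g x = 0
  · obtain ⟨r, hr, c, hc, hbound⟩ := hzero x hx.1 hgx
    refine ⟨ball x r, mem_nhdsWithin_of_mem_nhds (ball_mem_nhds x hr),
      (finite_singleton x).subset fun y ⟨hyr, hy⟩ => ?_⟩
    by_contra hyx
    have := hbound y hy.1 hyr
    rw [hy.2, abs_zero] at this
    have : 0 < c * |y - x| ^ n := by have := abs_pos.2 (sub_ne_zero.2 hyx); positivity
    linarith
  · refine ⟨{y | |g x| / 2 < |g y|}, nhdsWithin_mono _ inter_subset_left
      (hg.eventually_half_abs_lt_abs hx.1 hgx), finite_empty.subset fun y ⟨hy, hyZ⟩ => ?_⟩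
    have hy : |g x| / 2 < |g y| := hy
    rw [hyZ.2, abs_zero] at hy
    have : 0 < |g x| / 2 := by positivity
    linarith

/-- Glued by compactness from `hzero` near the zeros, from continuity at the other points of a
compact part of `s`, and from `hinf` off it. -/
theorem exists_lowerBoundAwayFromZeros (hs : IsClosed s) (hg : ContinuousOn g s)
    (hzero : ∀ z ∈ s, g z = 0 → ∃ r > 0, ∃ c > 0, ∀ y ∈ s, |y - z| < r →
      c * |y - z| ^ n ≤ |g y|)
    (hκ : 0 < κ) (hinf : ∀ᶠ y in cocompact ℝ ⊓ 𝓟 s, κ ≤ |g y|) :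
    ∃ c > 0, ∀ y ∈ s, LowerBoundAwayFromZeros s g n c y := by
  obtain ⟨K, hK, hKc⟩ := exists_isCompact_forall_notMem_of_eventually_cocompact hinf
  obtain ⟨c, hc, hcK⟩ : ∃ c > 0, ∀ y ∈ s ∩ K, y ∈ s → LowerBoundAwayFromZeros s g n c y := by
    refine (hK.inter_left hs).induction_on
      (p := fun t => ∃ c > 0, ∀ y ∈ t, y ∈ s → LowerBoundAwayFromZeros s g n c y)
      ⟨1, one_pos, by simp⟩ (fun t t' htt' ⟨c, hc, h⟩ => ⟨c, hc, fun y hy => h y (htt' hy)⟩)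
      (fun t t' ⟨c, hc, h⟩ ⟨c', hc', h'⟩ => ⟨min c c', lt_min hc hc', fun y hy hys =>
        hy.elim (fun hy => (h y hy hys).mono (min_le_left _ _))
          (fun hy => (h' y hy hys).mono (min_le_right _ _))⟩) ?_
    intro x hx
    by_cases hgx : g x = 0
    · obtain ⟨r, hr, c, hc, hbound⟩ := hzero x hx.1 hgx
      refine ⟨ball x r, mem_nhdsWithin_of_mem_nhds (ball_mem_nhds x hr),
        c, hc, fun y hyr hy ρ hρ _ hρZ => ?_⟩
      rw [mem_ball, Real.dist_eq] at hyr
      exact (mul_le_mul_of_nonneg_left (pow_le_pow_left₀ hρ.le (hρZ x hx.1 hgx) n)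
        hc.le).trans (hbound y hy hyr)
    · exact ⟨{y | |g x| / 2 < |g y|}, nhdsWithin_mono _ inter_subset_left
        (hg.eventually_half_abs_lt_abs hx.1 hgx), |g x| / 2, by positivity,
        fun y hy _ => lowerBoundAwayFromZeros_of_le_abs (by positivity) (le_of_lt hy)⟩
  refine ⟨min c κ, lt_min hc hκ, fun y hy => ?_⟩
  by_cases hyK : y ∈ K
  · exact (hcK y ⟨hy, hyK⟩ hy).mono (min_le_left _ _)
  · exact lowerBoundAwayFromZeros_of_le_abs (by positivity)
      ((min_le_right _ _).trans (hKc y hy hyK))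

end ZerosOfDerivative

/-- On the middle half of a zero-free interval `[x₁, x₂]` the lower bound gives
`|g| ≥ c ρ ^ n` with `ρ = min ((x₂ - x₁) / 4) 1`. -/
theorem mul_min_pow_mul_le_abs_sub {s : Set ℝ} (hs : s.OrdConnected) {f g : ℝ → ℝ} {n : ℕ}
    {c : ℝ} (hf : ContinuousOn f s) (hf' : ∀ x ∈ interior s, HasDerivAt f (g x) x)
    (hlow : ∀ y ∈ s, LowerBoundAwayFromZeros s g n c y)
    {x₁ x₂ : ℝ} (hx₁ : x₁ ∈ s) (hx₂ : x₂ ∈ s) (hlt : x₁ < x₂)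
    (hZ : ∀ z ∈ s, g z = 0 → z ∉ Icc x₁ x₂) :
    c * min ((x₂ - x₁) / 4) 1 ^ n * ((x₂ - x₁) / 2) ≤ |f x₂ - f x₁| := by
  set ρ := min ((x₂ - x₁) / 4) 1
  have hρ : 0 < ρ := lt_min (by linarith) one_pos
  have hρL : ρ ≤ (x₂ - x₁) / 4 := min_le_left _ _
  have hsep : ∀ x ∈ Ioo (x₁ + (x₂ - x₁) / 4) (x₂ - (x₂ - x₁) / 4), ∀ z ∈ s, g z = 0 →
      ρ ≤ |x - z| := fun x hx z hz hgz => by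
    rcases not_and_or.1 (hZ z hz hgz) with hz₁ | hz₂
    · rw [not_le] at hz₁
      rw [abs_of_pos (by linarith [hx.1])]
      linarith [hx.1]
    · rw [not_le] at hz₂
      rw [abs_sub_comm, abs_of_pos (by linarith [hx.2])]
      linarith [hx.2]
  have key := sub_le_abs_sub_of_le_abs_deriv (φ := fun x => c * ρ ^ n * x)
    (p := x₁ + (x₂ - x₁) / 4) (q := x₂ - (x₂ - x₁) / 4) (by linarith) (by linarith) (by linarith)
    (hf.mono (hs.out hx₁ hx₂)) (fun x hx => hf' x (hs.Ioo_subset_interior hx₁ hx₂ hx))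
    (fun x hx hgx => hZ x (hs.out hx₁ hx₂ (Ioo_subset_Icc_self hx)) hgx (Ioo_subset_Icc_self hx))
    (continuousOn_const.mul continuousOn_id) (fun x _ => (hasDerivAt_id' x).const_mul _)
    (fun x hx => by
      simpa using hlow x (hs.out hx₁ hx₂ ⟨by linarith [hx.1], by linarith [hx.2]⟩) ρ hρ
        (min_le_right _ _) (hsep x hx))
  calc c * ρ ^ n * ((x₂ - x₁) / 2)
      = c * ρ ^ n * (x₂ - (x₂ - x₁) / 4) - c * ρ ^ n * (x₁ + (x₂ - x₁) / 4) := by ring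
    _ ≤ |f x₂ - f x₁| := key

theorem le_of_mul_min_pow_mul_lt {c B δ L : ℝ} {n : ℕ} (hc : 0 < c) (hB : 2 / c ≤ B)
    (hB1 : 1 ≤ B) (hδ : 0 < δ) (hBδ : B * δ ≤ 1) (hL : 0 ≤ L)
    (h : c * min (L / 4) 1 ^ n * (L / 2) < 2 * δ ^ (n + 1)) : L ≤ 4 * B * δ := by
  set ρ := min (L / 4) 1
  have hρ : 0 ≤ ρ := le_min (by linarith) zero_le_one
  have hρL : ρ ≤ L / 4 := min_le_left _ _
  have hpow : ρ ^ (n + 1) < (B * δ) ^ (n + 1) := by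
    have h1 : c * ρ ^ (n + 1) < c * (2 / c * δ ^ (n + 1)) := by
      calc c * ρ ^ (n + 1) = c * ρ ^ n * ρ := by ring
        _ ≤ c * ρ ^ n * (L / 2) := by gcongr; linarith
        _ < 2 * δ ^ (n + 1) := h
        _ = c * (2 / c * δ ^ (n + 1)) := by field_simp
    calc ρ ^ (n + 1) < 2 / c * δ ^ (n + 1) := lt_of_mul_lt_mul_left h1 hc.le
      _ ≤ B ^ (n + 1) * δ ^ (n + 1) := by
        gcongr
        exact hB.trans (le_self_pow₀ hB1 (Nat.succ_ne_zero n))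
      _ = (B * δ) ^ (n + 1) := (mul_pow B δ (n + 1)).symm
  have hρB : ρ < B * δ := lt_of_pow_lt_pow_left₀ (n + 1) (by positivity) hpow
  have hρ_eq : ρ = L / 4 := min_eq_left (by
    by_contra hL4
    have : ρ = 1 := min_eq_right (by linarith)
    linarith)
  linarith

theorem sub_le_of_abs_sub_lt_two_mul_pow {s : Set ℝ} (hs : s.OrdConnected) {f g : ℝ → ℝ}
    {n : ℕ} {c B δ : ℝ} (hf : ContinuousOn f s) (hf' : ∀ x ∈ interior s, HasDerivAt f (g x) x)
    (hc : 0 < c) (hlow : ∀ y ∈ s, LowerBoundAwayFromZeros s g n c y) (hB : 2 / c ≤ B)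
    (hB1 : 1 ≤ B) (hδ : 0 < δ) (hBδ : B * δ ≤ 1) {x₁ x₂ : ℝ} (hx₁ : x₁ ∈ s) (hx₂ : x₂ ∈ s)
    (hle : x₁ ≤ x₂) (hZ : ∀ z ∈ s, g z = 0 → z ∉ Icc x₁ x₂)
    (hf₁₂ : |f x₂ - f x₁| < 2 * δ ^ (n + 1)) : x₂ - x₁ ≤ 4 * B * δ := by
  rcases hle.eq_or_lt with rfl | hlt
  · rw [sub_self]; positivity
  exact le_of_mul_min_pow_mul_lt hc hB hB1 hδ hBδ (by linarith)
    ((mul_min_pow_mul_le_abs_sub hs hf hf' hlow hx₁ hx₂ hlt hZ).trans_lt hf₁₂)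

theorem volume_thickening_le_of_sub_le {d δ : ℝ} (hd : 0 ≤ d) (hδ : 0 ≤ δ) {A : Set ℝ}
    (hA : ∀ x ∈ A, ∀ y ∈ A, x ≤ y → y - x ≤ d) :
    volume (thickening δ A) ≤ ENNReal.ofReal (d + 2 * δ) := by
  lift δ to NNReal using hδ
  have hdiam : ediam A ≤ ENNReal.ofReal d := ediam_le fun x hx y hy => by
    rw [edist_le_ofReal hd, Real.dist_eq]
    rcases le_total x y with hxy | hyx
    · rw [abs_sub_comm, abs_of_nonneg (by linarith)]
      exact hA x hx y hy hxy
    · rw [abs_of_nonneg (by linarith)]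
      exact hA y hy x hx hyx
  calc volume (thickening δ A) ≤ ediam (thickening δ A) := Real.volume_le_diam _
    _ ≤ ediam A + 2 * δ := ediam_thickening_le δ
    _ ≤ ENNReal.ofReal (d + 2 * δ) := by
      rw [ENNReal.ofReal_add hd (by positivity)]
      gcongr
      simp

/-- Splitting `A` at a point `z ∈ Z` into `A ∩ Iio z`, `A ∩ Ioi z` and `{z}` triples the bound. -/
theorem volume_thickening_le_of_sub_le_of_finset {d δ : ℝ} (hd : 0 ≤ d) (hδ : 0 ≤ δ)
    (Z : Finset ℝ) :
    ∀ A : Set ℝ, (∀ x ∈ A, ∀ y ∈ A, x ≤ y → (∀ z ∈ Z, z ∉ Icc x y) → y - x ≤ d) →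
      volume (thickening δ A) ≤ 3 ^ Z.card * ENNReal.ofReal (d + 2 * δ) := by
  induction Z using Finset.induction with
  | empty =>
    intro A hA
    simpa using volume_thickening_le_of_sub_le hd hδ fun x hx y hy hxy =>
      hA x hx y hy hxy (by simp)
  | @insert z Z hz ih =>
    intro A hA
    have hA' : ∀ t ⊆ A, (∀ x ∈ t, ∀ y ∈ t, x ≤ y → z ∉ Icc x y) →
        volume (thickening δ t) ≤ 3 ^ Z.card * ENNReal.ofReal (d + 2 * δ) :=
      fun t htA ht => ih t fun x hx y hy hxy hZ => hA x (htA hx) y (htA hy) hxy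
        (fun w hw => (Finset.mem_insert.1 hw).elim (· ▸ ht x hx y hy hxy) (hZ w))
    have hsplit : A ⊆ (A ∩ Iio z ∪ A ∩ Ioi z) ∪ {z} := fun x hx => by
      rcases lt_trichotomy x z with h | rfl | h
      exacts [Or.inl (Or.inl ⟨hx, h⟩), Or.inr rfl, Or.inl (Or.inr ⟨hx, h⟩)]
    calc volume (thickening δ A)
        ≤ volume (thickening δ (A ∩ Iio z)) + volume (thickening δ (A ∩ Ioi z)) +
            volume (thickening δ {z}) := by
          grw [thickening_subset_of_subset δ hsplit, thickening_union, thickening_union,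
            measure_union_le, measure_union_le]
      _ ≤ 3 ^ Z.card * ENNReal.ofReal (d + 2 * δ) + 3 ^ Z.card * ENNReal.ofReal (d + 2 * δ) +
            3 ^ Z.card * ENNReal.ofReal (d + 2 * δ) := by
          gcongr
          · exact hA' _ inter_subset_left fun x hx y hy _ hz => absurd hz.2 (not_le.2 hy.2)
          · exact hA' _ inter_subset_left fun x hx y hy _ hz => absurd hz.1 (not_le.2 hx.2)
          · rw [thickening_singleton, Real.volume_ball]
            exact (ENNReal.ofReal_le_ofReal (by linarith)).trans
              (le_mul_of_one_le_left (by positivity) (one_le_pow₀ (by norm_num)))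
      _ = 3 ^ (insert z Z).card * ENNReal.ofReal (d + 2 * δ) := by
          rw [Finset.card_insert_of_notMem hz, pow_succ]
          ring

theorem exists_volume_thickening_setOf_abs_sub_lt_le {s : Set ℝ} (hs : IsClosed s)
    (hsc : s.OrdConnected) (hsu : UniqueDiffOn ℝ s) {m : ℕ} (hm : 1 ≤ m) {v : ℝ → ℝ}
    (hv : ContDiffOn ℝ m v s)
    (hnd : ∀ y ∈ s, 0 < ∑ j ∈ Finset.Icc 1 m, |iteratedDerivWithin j v s y|) {κ : ℝ}
    (hκ : 0 < κ) (hinf : ∀ᶠ y in cocompact ℝ ⊓ 𝓟 s, κ ≤ |derivWithin v s y|) :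
    ∃ C > 0, ∃ δ₀ > 0, ∀ lam δ : ℝ, 0 < δ → δ ≤ δ₀ →
      volume (thickening δ {z ∈ s | |v z - lam| < δ ^ m}) ≤ ENNReal.ofReal (C * δ) := by
  obtain ⟨n, rfl⟩ : ∃ n, m = n + 1 := ⟨m - 1, by omega⟩
  push_cast at hv
  have hg : ContinuousOn (derivWithin v s) s := by
    simpa only [iteratedDerivWithin_one] using
      hv.continuousOn_iteratedDerivWithin (m := 1) (by simp) hsu
  have hvg : ∀ x ∈ interior s, HasDerivAt v (derivWithin v s x) x := fun x hx => by
    simpa only [iteratedDerivWithin_zero, zero_add, iteratedDerivWithin_one] using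
      hv.hasDerivAt_iteratedDerivWithin (m := n + 1) hsu (j := 0) (by simp) hx
  have hzero : ∀ z ∈ s, derivWithin v s z = 0 → ∃ r > 0, ∃ c > 0, ∀ y ∈ s, |y - z| < r →
      c * |y - z| ^ n ≤ |derivWithin v s y| :=
    fun z hz _ => exists_mul_pow_le_abs_derivWithin hsc hsu hv hz (hnd z hz)
  obtain ⟨c, hc, hlow⟩ := exists_lowerBoundAwayFromZeros hs hg hzero hκ hinf
  have hfin := finite_setOf_mem_and_eq_zero hs hg hzero hκ hinf
  set B := max (2 / c) 1
  refine ⟨3 ^ hfin.toFinset.card * (4 * B + 2), by positivity, 1 / B, by positivity,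
    fun lam δ hδ hδB => ?_⟩
  have hBδ : B * δ ≤ 1 := by rwa [le_div_iff₀ (by positivity), mul_comm] at hδB
  calc volume (thickening δ {z ∈ s | |v z - lam| < δ ^ (n + 1)})
      ≤ 3 ^ hfin.toFinset.card * ENNReal.ofReal (4 * B * δ + 2 * δ) := by
        refine volume_thickening_le_of_sub_le_of_finset (by positivity) hδ.le _ _
          fun x hx y hy hxy hZ => ?_
        refine sub_le_of_abs_sub_lt_two_mul_pow hsc hv.continuousOn hvg hc hlow (le_max_left _ _)
          (le_max_right _ _) hδ hBδ hx.1 hy.1 hxy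
          (fun z hz hgz => hZ z (hfin.mem_toFinset.2 ⟨hz, hgz⟩)) ?_
        calc |v y - v x| ≤ |v y - lam| + |v x - lam| := by
              simpa only [abs_sub_comm lam] using abs_sub_le (v y) lam (v x)
          _ < 2 * δ ^ (n + 1) := by linarith [hx.2, hy.2]
    _ = ENNReal.ofReal (3 ^ hfin.toFinset.card * (4 * B + 2) * δ) := by
        rw [show 3 ^ hfin.toFinset.card * (4 * B + 2) * δ =
          3 ^ hfin.toFinset.card * (4 * B * δ + 2 * δ) by ring,
          ENNReal.ofReal_mul (by positivity), ENNReal.ofReal_pow (by norm_num),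
          ENNReal.ofReal_ofNat]

/-- uniform-in-`λ` measure estimate for `𝓔^m_{λ,δ}` on a non-compact
region.  For `Ω` one of `ℝ`, `(-∞, L₁)`, `(L₂, ∞)`, if `v ∈ C^m(cl Ω)` satisfies the
`m`-th order non-degeneracy condition on `cl Ω` and the non-degeneracy condition at
infinity, then there are `C > 0` and `δ₀ > 0` such that for every `λ ∈ ℝ` and every
`δ ∈ (0, δ₀]`, `m(𝓔^m_{λ,δ}) ≤ C δ`, where
`𝓔^m_{λ,δ} = {y ∈ Ω : dist(y, E^m_{λ,δ}) < δ}` (with `dist(y, ∅) = ∞`) and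
`E^m_{λ,δ} = {y ∈ Ω : |v(y) − λ| < δ^m}`. -/
theorem measure_estimate_noncompact
    (Ω : Set ℝ)
    (hΩ : Ω = Set.univ ∨ (∃ L₁ : ℝ, Ω = Set.Iio L₁) ∨ (∃ L₂ : ℝ, Ω = Set.Ioi L₂))
    (m : ℕ) (hm : 1 ≤ m) (v : ℝ → ℝ)
    (hv : ContDiffOn ℝ m v (closure Ω))
    (hnd : ∀ y ∈ closure Ω,
      0 < ∑ j ∈ Finset.Icc 1 m, |iteratedDerivWithin j v (closure Ω) y|)
    (c₀ : ℝ) (hc₀ : 0 < c₀)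
    (hinf : c₀ ≤ Filter.liminf (fun y => |derivWithin v (closure Ω) y|)
      (Filter.cocompact ℝ ⊓ Filter.principal (closure Ω))) :
    ∃ C > 0, ∃ δ₀ > 0, ∀ lam : ℝ, ∀ δ : ℝ, 0 < δ → δ ≤ δ₀ →
      volume {y ∈ Ω |
          EMetric.infEdist y {z ∈ Ω | |v z - lam| < δ ^ m} < ENNReal.ofReal δ}
        ≤ ENNReal.ofReal (C * δ) := by
  obtain ⟨hcl, hsc, hsu⟩ : IsClosed (closure Ω) ∧ (closure Ω).OrdConnected ∧
      UniqueDiffOn ℝ (closure Ω) := by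
    rcases hΩ with rfl | ⟨L, rfl⟩ | ⟨L, rfl⟩
    · rw [closure_univ]; exact ⟨isClosed_univ, ordConnected_univ, uniqueDiffOn_univ⟩
    · rw [closure_Iio]; exact ⟨isClosed_Iic, ordConnected_Iic, uniqueDiffOn_Iic L⟩
    · rw [closure_Ioi]; exact ⟨isClosed_Ici, ordConnected_Ici, uniqueDiffOn_Ici L⟩
  have hinf' : ∀ᶠ y in cocompact ℝ ⊓ 𝓟 (closure Ω), c₀ / 2 ≤ |derivWithin v (closure Ω) y| :=
    (eventually_lt_of_lt_liminf (by linarith) (isBoundedUnder_of ⟨0, fun y => abs_nonneg _⟩)).mono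
      fun _ => le_of_lt
  obtain ⟨C, hC, δ₀, hδ₀, hbound⟩ := exists_volume_thickening_setOf_abs_sub_lt_le hcl hsc hsu hm
    hv hnd (by positivity) hinf'
  refine ⟨C, hC, δ₀, hδ₀, fun lam δ hδ hδδ₀ => (measure_mono fun y hy => ?_).trans
    (hbound lam δ hδ hδδ₀)⟩
  have hE : {z ∈ Ω | |v z - lam| < δ ^ m} ⊆ {z ∈ closure Ω | |v z - lam| < δ ^ m} :=
    fun z hz => ⟨subset_closure hz.1, hz.2⟩
  exact (infEDist_anti hE).trans_lt hy.2
end
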